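/- arXiv:1010.3778 — 8 statements merged into one kernel-verified Lean document; each statement's English description precedes it below -/
import Mathlib

section
/- Let G be a second-countable topological group equipped with its Borel σ-algebra, Γ ≤ G a countable subgroup, Y a standard Borel space with an action of Γ by Borel automorphisms, and ψ : G → Y a Borel map with the property that for every γ ∈ Γ there exists a neighborhood V of the identity of G such that ψ(γ z γ⁻¹) = γ · ψ(z) for all z ∈ V with z ≠ 1. Let X ⊆ G be a Borel set, η a Borel probability measure on X, c > 0, and (μ_n) a sequence of Borel probability measures on X × X such that: μ_n(Δ) = 0 for all n; the first marginal of μ_n is dominated by c·η for all n; and μ_n(A × (X∖A)) → 0 for every Borel subset A ⊆ X. Let φ₁, φ₂ : X → Γ be Borel maps, and let D be the set of pairs (x,y) ∈ (X × X)∖Δ such that ψ( φ₁(x) · x · φ₂(x) · φ₂(y)⁻¹ · y⁻¹ · φ₁(y)⁻¹ ) = φ₁(x) · ψ(x y⁻¹). Then lim_{n→∞} μ_n(D) = 1. -/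
/-!
Points of `X` can be grouped into countably many Borel pieces on which `φ₁` and `φ₂` are
constant and which are so small that `x y⁻¹` lies in the neighbourhood where `ψ` is equivariant
for the conjugation by the common value `γ = φ₁ x`. On such a piece the argument of `ψ` in the
definition of `D` is `γ (x y⁻¹) γ⁻¹`, so off the diagonal every pair lying in a common piece
belongs to `D`. The mass that `μ_n` gives to pairs separated by the pieces tends to zero: the
first finitely many pieces `A` contribute `μ_n(A × Aᶜ) → 0`, and the remaining ones are
controlled uniformly in `n` by `c · η` of their union, thanks to the marginal bound.
-/

open MeasureTheory Filter Topology Set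
open scoped NNReal ENNReal Pointwise

lemma ENNReal.tendsto_nhds_zero_of_forall_le_add {ι κ : Type*} {l : Filter ι} {l' : Filter κ}
    [l'.NeBot] {a : ι → ℝ≥0∞} {b : κ → ι → ℝ≥0∞} {e : κ → ℝ≥0∞}
    (hb : ∀ N, Tendsto (b N) l (𝓝 0)) (he : Tendsto e l' (𝓝 0))
    (hle : ∀ N n, a n ≤ b N n + e N) : Tendsto a l (𝓝 0) := by
  refine ENNReal.tendsto_nhds_zero.2 fun ε hε => ?_
  obtain ⟨N, hN⟩ := (ENNReal.tendsto_nhds_zero.1 he _ (ENNReal.half_pos hε.ne')).exists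
  filter_upwards [ENNReal.tendsto_nhds_zero.1 (hb N) _ (ENNReal.half_pos hε.ne')] with n hn
  calc a n ≤ b N n + e N := hle N n
    _ ≤ ε / 2 + ε / 2 := add_le_add hn hN
    _ = ε := ENNReal.add_halves ε

lemma tendsto_toReal_measure_of_tendsto_measure_compl {ι β : Type*} [MeasurableSpace β]
    {l : Filter ι} {μ : ι → Measure β} [∀ n, IsProbabilityMeasure (μ n)] {s : Set β}
    (h : Tendsto (fun n => μ n sᶜ) l (𝓝 0)) : Tendsto (fun n => (μ n s).toReal) l (𝓝 1) := by
  have hlow : Tendsto (fun n => 1 - μ n sᶜ) l (𝓝 1) := by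
    simpa using ENNReal.Tendsto.sub tendsto_const_nhds h (Or.inl ENNReal.one_ne_top)
  have hle : ∀ n, 1 - μ n sᶜ ≤ μ n s := fun n =>
    tsub_le_iff_right.2 (by simpa using measure_univ_le_add_compl (μ := μ n) s)
  have : Tendsto (fun n => μ n s) l (𝓝 1) :=
    tendsto_of_tendsto_of_tendsto_of_le_of_le hlow tendsto_const_nhds hle fun n => prob_le_one
  exact (ENNReal.tendsto_toReal ENNReal.one_ne_top).comp this

lemma compl_iUnion_prod_self_subset {α ι : Type*} [Preorder ι] [LocallyFiniteOrderBot ι]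
    (P : ι → Set α) (N : ι) :
    (⋃ k, P k ×ˢ P k)ᶜ ⊆ (⋃ k ∈ Finset.Iic N, P k ×ˢ (P k)ᶜ) ∪ (accumulate P N)ᶜ ×ˢ univ := by
  rintro ⟨x, y⟩ hxy
  by_cases hx : x ∈ accumulate P N
  · obtain ⟨k, hkN, hxk⟩ := mem_accumulate.1 hx
    exact Or.inl (mem_biUnion (Finset.mem_Iic.2 hkN)
      ⟨hxk, fun hyk => hxy (mem_iUnion.2 ⟨k, hxk, hyk⟩)⟩)
  · exact Or.inr ⟨hx, trivial⟩

section Separation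

variable {α : Type*} [MeasurableSpace α] {η : Measure α} {c : ℝ≥0} {μ : ℕ → Measure (α × α)}

lemma measure_prod_univ_le_of_map_fst_le {ν : Measure (α × α)} (h : ν.map Prod.fst ≤ c • η)
    {A : Set α} (hA : MeasurableSet A) : ν (A ×ˢ univ) ≤ c * η A := by
  rw [prod_univ, ← Measure.map_apply measurable_fst hA]
  simpa using h A

variable [IsFiniteMeasure η] (hmarg : ∀ n, (μ n).map Prod.fst ≤ c • η)
  (hsplit : ∀ A, MeasurableSet A → Tendsto (fun n => μ n (A ×ˢ Aᶜ)) atTop (𝓝 0))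
include hmarg hsplit

lemma tendsto_measure_compl_iUnion_prod_self {P : ℕ → Set α} (hP : ∀ k, MeasurableSet (P k))
    (hcover : ⋃ k, P k = univ) : Tendsto (fun n => μ n (⋃ k, P k ×ˢ P k)ᶜ) atTop (𝓝 0) := by
  have hacc : ∀ N, MeasurableSet (accumulate P N) := fun N => by
    rw [accumulate_def]
    exact .biUnion (to_countable _) fun k _ => hP k
  have htail : Tendsto (fun N => η (accumulate P N)ᶜ) atTop (𝓝 0) := by
    have := ENNReal.Tendsto.sub tendsto_const_nhds (tendsto_measure_iUnion_accumulate (μ := η) (f := P))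
      (Or.inl (measure_ne_top η univ))
    rw [hcover, tsub_self] at this
    exact this.congr fun N => (measure_compl (hacc N) (measure_ne_top _ _)).symm
  refine ENNReal.tendsto_nhds_zero_of_forall_le_add (l' := atTop)
    (b := fun N n => ∑ k ∈ Finset.Iic N, μ n (P k ×ˢ (P k)ᶜ))
    (e := fun N => c * η (accumulate P N)ᶜ) (fun N => ?_) ?_ fun N n => ?_
  · simpa using tendsto_finsetSum _ fun k _ => hsplit (P k) (hP k)
  · simpa using ENNReal.Tendsto.const_mul htail (Or.inr ENNReal.coe_ne_top)
  · exact (measure_mono (compl_iUnion_prod_self_subset P N)).trans <|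
      (measure_union_le _ _).trans <| add_le_add (measure_biUnion_finset_le _ _)
        (measure_prod_univ_le_of_map_fst_le (hmarg n) (hacc N).compl)

lemma tendsto_measure_compl_biUnion_prod_self {𝒮 : Set (Set α)} (h𝒮 : 𝒮.Countable)
    (hmeas : ∀ P ∈ 𝒮, MeasurableSet P) (hcover : ⋃₀ 𝒮 = univ) :
    Tendsto (fun n => μ n (⋃ P ∈ 𝒮, P ×ˢ P)ᶜ) atTop (𝓝 0) := by
  rcases 𝒮.eq_empty_or_nonempty with rfl | hne
  · have : IsEmpty α := univ_eq_empty_iff.1 (by simpa using hcover.symm)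
    simp [eq_empty_of_isEmpty]
  · obtain ⟨P, rfl⟩ := h𝒮.exists_eq_range hne
    rw [sUnion_range] at hcover
    simpa only [biUnion_range] using tendsto_measure_compl_iUnion_prod_self hmarg hsplit
      (fun k => hmeas _ (mem_range_self k)) hcover

end Separation

lemma TopologicalSpace.IsTopologicalBasis.exists_mem_div_subset {G : Type*} [Group G]
    [TopologicalSpace G] [IsTopologicalGroup G] {b : Set (Set G)}
    (hb : TopologicalSpace.IsTopologicalBasis b) {W : Set G} (hW : W ∈ 𝓝 1) (x : G) :
    ∃ B ∈ b, x ∈ B ∧ B / B ⊆ W := by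
  have hdiv : ∀ᶠ p in 𝓝 x ×ˢ 𝓝 x, p.1 / p.2 ∈ W := by
    have h := continuous_div'.tendsto (x, x)
    rw [nhds_prod_eq] at h
    exact h (by simpa using hW)
  obtain ⟨U, hU, hUW⟩ := mem_prod_self_iff.1 hdiv
  obtain ⟨B, hB, hxB, hBU⟩ := hb.mem_nhds_iff.1 hU
  exact ⟨B, hB, hxB, div_subset_iff.2 fun a ha d hd => hUW (mk_mem_prod (hBU ha) (hBU hd))⟩

lemma exists_countable_measurableSet_cover_div_mem {G κ : Type*} [Group G] [TopologicalSpace G]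
    [IsTopologicalGroup G] [SecondCountableTopology G] [MeasurableSpace G] [BorelSpace G]
    [Countable κ] {X : Set G} (φ : X → κ) (hφ : ∀ k, MeasurableSet (φ ⁻¹' {k}))
    (W : κ → Set G) (hW : ∀ k, W k ∈ 𝓝 1) :
    ∃ 𝒮 : Set (Set X), 𝒮.Countable ∧ (∀ P ∈ 𝒮, MeasurableSet P) ∧ ⋃₀ 𝒮 = univ ∧
      ∀ P ∈ 𝒮, ∀ x ∈ P, ∀ y ∈ P, φ x = φ y ∧ (x : G) / y ∈ W (φ x) := by
  obtain ⟨b, hbc, -, hb⟩ := TopologicalSpace.exists_countable_basis G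
  have := hbc.to_subtype
  refine ⟨range fun i : κ × b => {x : X | (i.2 : Set G) / i.2 ⊆ W i.1 ∧ φ x = i.1 ∧ ↑x ∈ i.2.1},
    countable_range _, ?_, ?_, ?_⟩
  · rintro _ ⟨i, rfl⟩
    exact (MeasurableSet.const _).inter
      ((hφ _).inter ((hb.isOpen i.2.2).measurableSet.preimage measurable_subtype_coe))
  · refine eq_univ_of_forall fun x => ?_
    obtain ⟨B, hB, hxB, hBW⟩ := hb.exists_mem_div_subset (hW (φ x)) x
    exact mem_sUnion.2 ⟨_, ⟨(φ x, ⟨B, hB⟩), rfl⟩, hBW, rfl, hxB⟩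
  · rintro _ ⟨i, rfl⟩ x ⟨hiW, hx, hxB⟩ y ⟨-, hy, hyB⟩
    exact ⟨hx.trans hy.symm, hx ▸ hiW (div_mem_div hxB hyB)⟩

theorem lemmaF_general
    -- G a second-countable topological group with its Borel σ-algebra
    (G : Type*) [Group G] [TopologicalSpace G] [IsTopologicalGroup G]
    [SecondCountableTopology G] [MeasurableSpace G] [BorelSpace G]
    -- Γ a countable subgroup of G
    (Γ : Subgroup G) (hΓcount : Countable Γ)
    -- Y a standard Borel space with an action of Γ by Borel automorphisms
    (Y : Type*) [MulAction Γ Y]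
    -- ψ : G → Y a Borel map which is locally Γ-equivariant near the identity:
    (ψ : G → Y)
    (hequiv : ∀ γ : Γ, ∃ V ∈ 𝓝 (1 : G), ∀ z ∈ V, z ≠ 1 →
      ψ ((γ : G) * z * (γ : G)⁻¹) = γ • ψ z)
    -- X ⊆ G a Borel set with a Borel probability measure η
    (X : Set G)
    (η : Measure X) (hη : IsProbabilityMeasure η)
    -- the constant c > 0 and the sequence of measures μ_n on X × X
    (c : ℝ≥0)
    (μ : ℕ → Measure (X × X)) (hμprob : ∀ n, IsProbabilityMeasure (μ n))
    -- μ_n gives no mass to the diagonal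
    (hdiag : ∀ n, μ n (Set.diagonal X) = 0)
    -- the first marginal of μ_n is dominated by c·η
    (hmarg : ∀ n, (μ n).map Prod.fst ≤ c • η)
    -- μ_n(A × (X∖A)) → 0 for every Borel A ⊆ X
    (hsplit : ∀ A : Set X, MeasurableSet A →
      Tendsto (fun n => ((μ n) (A ×ˢ Aᶜ)).toReal) atTop (𝓝 0))
    -- φ₁, φ₂ : X → Γ Borel maps (preimages of points are Borel)
    (φ₁ φ₂ : X → Γ)
    (hφ₁ : ∀ γ : Γ, MeasurableSet (φ₁ ⁻¹' {γ})) (hφ₂ : ∀ γ : Γ, MeasurableSet (φ₂ ⁻¹' {γ}))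
    -- D = the set of off-diagonal pairs on which ψ intertwines as expected
    (D : Set (X × X))
    (hD : D = {p : X × X | p.1 ≠ p.2 ∧
      ψ ((φ₁ p.1 : G) * (p.1 : G) * (φ₂ p.1 : G) * ((φ₂ p.2 : G))⁻¹ * ((p.2 : G))⁻¹ *
          ((φ₁ p.2 : G))⁻¹) =
        (φ₁ p.1) • ψ ((p.1 : G) * ((p.2 : G))⁻¹)}) :
    Tendsto (fun n => ((μ n) D).toReal) atTop (𝓝 1) := by
  choose V hV hψV using hequiv
  obtain ⟨𝒮, h𝒮, h𝒮meas, h𝒮cover, h𝒮small⟩ := exists_countable_measurableSet_cover_div_mem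
    (fun x => (φ₁ x, φ₂ x)) (fun ⟨γ, δ⟩ => by
      rw [← singleton_prod_singleton, mk_preimage_prod]
      exact (hφ₁ γ).inter (hφ₂ δ)) (fun k => V k.1) (fun k => hV k.1)
  have hsame : (⋃ P ∈ 𝒮, P ×ˢ P) \ diagonal X ⊆ D := by
    rintro ⟨x, y⟩ ⟨hxy, hne : x ≠ y⟩
    obtain ⟨P, hP, hxP, hyP⟩ := mem_iUnion₂.1 hxy
    obtain ⟨hφ, hxy_mem⟩ := h𝒮small P hP x hxP y hyP
    obtain ⟨hφ₁xy, hφ₂xy⟩ := Prod.mk.inj hφ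
    have hconj : (φ₁ x : G) * x * φ₂ x * (φ₂ y : G)⁻¹ * (y : G)⁻¹ * (φ₁ y : G)⁻¹ =
        φ₁ x * ((x : G) / y) * (φ₁ x : G)⁻¹ := by
      rw [hφ₁xy, hφ₂xy, div_eq_mul_inv]
      group
    rw [hD]
    refine ⟨hne, ?_⟩
    rw [hconj, hψV _ _ hxy_mem (div_ne_one.2 (Subtype.coe_injective.ne hne)), div_eq_mul_inv]
  have hbad := tendsto_measure_compl_biUnion_prod_self hmarg (fun A hA => (ENNReal.tendsto_toReal_iff
    (fun n => measure_ne_top _ _) ENNReal.zero_ne_top).1 (by simpa using hsplit A hA)) h𝒮 h𝒮meas h𝒮cover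
  refine tendsto_toReal_measure_of_tendsto_measure_compl <| tendsto_of_tendsto_of_tendsto_of_le_of_le
    tendsto_const_nhds hbad (fun _ => bot_le) fun n => ?_
  calc μ n Dᶜ ≤ μ n (diagonal X ∪ (⋃ P ∈ 𝒮, P ×ˢ P)ᶜ) := by
        rw [← Set.compl_sdiff]
        exact measure_mono (compl_subset_compl.2 hsame)
    _ ≤ μ n (⋃ P ∈ 𝒮, P ×ˢ P)ᶜ := by
        simpa [hdiag n] using measure_union_le (μ := μ n) (diagonal X) _

theorem lemmaF
    -- G a second-countable topological group with its Borel σ-algebra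
    (G : Type*) [Group G] [TopologicalSpace G] [IsTopologicalGroup G]
    [SecondCountableTopology G] [MeasurableSpace G] [BorelSpace G]
    -- Γ a countable subgroup of G
    (Γ : Subgroup G) (hΓcount : Countable Γ)
    -- Y a standard Borel space with an action of Γ by Borel automorphisms
    (Y : Type*) [MeasurableSpace Y] [StandardBorelSpace Y] [MulAction Γ Y]
    (hact : ∀ γ : Γ, Measurable (fun y : Y => γ • y))
    -- ψ : G → Y a Borel map which is locally Γ-equivariant near the identity:
    (ψ : G → Y) (hψ : Measurable ψ)
    (hequiv : ∀ γ : Γ, ∃ V ∈ 𝓝 (1 : G), ∀ z ∈ V, z ≠ 1 →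
      ψ ((γ : G) * z * (γ : G)⁻¹) = γ • ψ z)
    -- X ⊆ G a Borel set with a Borel probability measure η
    (X : Set G) (hX : MeasurableSet X)
    (η : Measure X) (hη : IsProbabilityMeasure η)
    -- the constant c > 0 and the sequence of measures μ_n on X × X
    (c : ℝ≥0) (hc : 0 < c)
    (μ : ℕ → Measure (X × X)) (hμprob : ∀ n, IsProbabilityMeasure (μ n))
    -- μ_n gives no mass to the diagonal
    (hdiag : ∀ n, μ n (Set.diagonal X) = 0)
    -- the first marginal of μ_n is dominated by c·η
    (hmarg : ∀ n, (μ n).map Prod.fst ≤ c • η)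
    -- μ_n(A × (X∖A)) → 0 for every Borel A ⊆ X
    (hsplit : ∀ A : Set X, MeasurableSet A →
      Tendsto (fun n => ((μ n) (A ×ˢ Aᶜ)).toReal) atTop (𝓝 0))
    -- φ₁, φ₂ : X → Γ Borel maps (preimages of points are Borel)
    (φ₁ φ₂ : X → Γ)
    (hφ₁ : ∀ γ : Γ, MeasurableSet (φ₁ ⁻¹' {γ})) (hφ₂ : ∀ γ : Γ, MeasurableSet (φ₂ ⁻¹' {γ}))
    -- D = the set of off-diagonal pairs on which ψ intertwines as expected
    (D : Set (X × X))
    (hD : D = {p : X × X | p.1 ≠ p.2 ∧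
      ψ ((φ₁ p.1 : G) * (p.1 : G) * (φ₂ p.1 : G) * ((φ₂ p.2 : G))⁻¹ * ((p.2 : G))⁻¹ *
          ((φ₁ p.2 : G))⁻¹) =
        (φ₁ p.1) • ψ ((p.1 : G) * ((p.2 : G))⁻¹)}) :
    Tendsto (fun n => ((μ n) D).toReal) atTop (𝓝 1) :=
  lemmaF_general G Γ hΓcount Y ψ hequiv X η hη c μ hμprob hdiag hmarg hsplit φ₁ φ₂ hφ₁ hφ₂ D hD
end

section
/- Let X be a measurable space, η a probability measure on X, c > 0, and (μ_n) a sequence of probability measures on X × X such that the first marginal of μ_n is dominated by c·η for all n, and μ_n(A × (X∖A)) → 0 for every measurable subset A ⊆ X. Then for every countable measurable partition {B_i}_{i=1}^∞ of X, one has μ_n( ⋃_{i=1}^∞ (B_i × B_i) ) → 1 as n → ∞. -/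
open MeasureTheory Filter Topology
open scoped NNReal ENNReal

/-!
The complement of `⋃ i, B i ×ˢ B i` is `⋃ i, B i ×ˢ (B i)ᶜ`. Each piece has vanishing `μ n`-mass,
and the domination of the first marginals by `c • η` makes the tails `⋃ i ≥ k, B i ×ˢ (B i)ᶜ`
small uniformly in `n`, because `η (⋃ i ≥ k, B i) → 0`; an `ε/2` argument finishes.
-/

theorem compl_iUnion_prod_self_eq_iUnion_prod_compl {ι α : Type*} {B : ι → Set α}
    (hdisj : Pairwise (Function.onFun Disjoint B)) (hcover : ⋃ i, B i = Set.univ) :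
    (⋃ i, B i ×ˢ B i)ᶜ = ⋃ i, B i ×ˢ (B i)ᶜ := by
  ext ⟨x, y⟩
  simp only [Set.mem_compl_iff, Set.mem_iUnion, Set.mem_prod, not_exists, not_and]
  constructor
  · intro h
    obtain ⟨i, hxi⟩ := Set.mem_iUnion.mp (hcover ▸ Set.mem_univ x)
    exact ⟨i, hxi, h i hxi⟩
  · rintro ⟨i, hxi, hyi⟩ j hxj hyj
    obtain rfl | hne := eq_or_ne j i
    · exact hyi hyj
    · exact Set.disjoint_left.mp (hdisj hne) hxj hxi

theorem iUnion_subset_biUnion_range_union_biUnion_ge {α : Type*} (S : ℕ → Set α) (k : ℕ) :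
    ⋃ i, S i ⊆ (⋃ i ∈ Finset.range k, S i) ∪ ⋃ i ≥ k, S i := by
  refine Set.iUnion_subset fun i => ?_
  rcases lt_or_ge i k with hik | hik
  · exact (Set.subset_biUnion_of_mem (u := S) (Finset.mem_range.mpr hik)).trans
      Set.subset_union_left
  · exact (Set.subset_biUnion_of_mem (u := S) (show i ≥ k from hik)).trans
      Set.subset_union_right

theorem tendsto_measure_iUnion_zero_of_uniform_tail {α : Type*} [MeasurableSpace α]
    {μ : ℕ → Measure α} {S : ℕ → Set α} {g : ℕ → ℝ≥0∞}
    (hS : ∀ i, Tendsto (fun n => μ n (S i)) atTop (𝓝 0))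
    (hg : Tendsto g atTop (𝓝 0)) (htail : ∀ n k, μ n (⋃ i ≥ k, S i) ≤ g k) :
    Tendsto (fun n => μ n (⋃ i, S i)) atTop (𝓝 0) := by
  rw [ENNReal.tendsto_nhds_zero]
  intro ε hε
  have hε2 : (0 : ℝ≥0∞) < ε / 2 := ENNReal.half_pos hε.ne'
  obtain ⟨k, hk⟩ := (hg.eventually_lt_const hε2).exists
  have hhead : Tendsto (fun n => ∑ i ∈ Finset.range k, μ n (S i)) atTop (𝓝 0) := by
    simpa using tendsto_finsetSum (Finset.range k) fun i _ => hS i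
  filter_upwards [hhead.eventually_le_const hε2] with n hn
  calc μ n (⋃ i, S i)
      ≤ μ n ((⋃ i ∈ Finset.range k, S i) ∪ ⋃ i ≥ k, S i) :=
        measure_mono (iUnion_subset_biUnion_range_union_biUnion_ge S k)
    _ ≤ (∑ i ∈ Finset.range k, μ n (S i)) + g k :=
        (measure_union_le _ _).trans (add_le_add (measure_biUnion_finset_le _ _) (htail n k))
    _ ≤ ε / 2 + ε / 2 := add_le_add hn hk.le
    _ = ε := ENNReal.add_halves ε

theorem tendsto_measure_iUnion_prod_zero_of_map_fst_le {X Y : Type*} [MeasurableSpace X]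
    [MeasurableSpace Y] {μ : ℕ → Measure (X × Y)} {η : Measure X} [IsFiniteMeasure η] {c : ℝ≥0}
    (hmarg : ∀ n, (μ n).map Prod.fst ≤ c • η)
    {B : ℕ → Set X} (hBmeas : ∀ i, MeasurableSet (B i))
    (hBdisj : Pairwise (Function.onFun Disjoint B)) (C : ℕ → Set Y)
    (hBC : ∀ i, Tendsto (fun n => μ n (B i ×ˢ C i)) atTop (𝓝 0)) :
    Tendsto (fun n => μ n (⋃ i, B i ×ˢ C i)) atTop (𝓝 0) := by
  have hηtail : Tendsto (fun k => (c : ℝ≥0∞) * η (⋃ i ≥ k, B i)) atTop (𝓝 0) := by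
    simpa using ENNReal.Tendsto.const_mul
      (tendsto_measure_biUnion_Ici_zero_of_pairwise_disjoint
        (fun i => (hBmeas i).nullMeasurableSet) hBdisj) (Or.inr ENNReal.coe_ne_top)
  refine tendsto_measure_iUnion_zero_of_uniform_tail hBC hηtail fun n k => ?_
  have hsub : ⋃ i ≥ k, B i ×ˢ C i ⊆ Prod.fst ⁻¹' ⋃ i ≥ k, B i := by
    simp only [Set.preimage_iUnion]
    exact Set.iUnion₂_mono fun i _ => Set.prod_subset_preimage_fst _ _
  calc μ n (⋃ i ≥ k, B i ×ˢ C i) ≤ μ n (Prod.fst ⁻¹' ⋃ i ≥ k, B i) := measure_mono hsub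
    _ ≤ (μ n).map Prod.fst (⋃ i ≥ k, B i) := Measure.le_map_apply measurable_fst.aemeasurable _
    _ ≤ (c • η) (⋃ i ≥ k, B i) := hmarg n _
    _ = c * η (⋃ i ≥ k, B i) := by simp

theorem partition_claim_general
    (X : Type*) [MeasurableSpace X]
    (η : Measure X) (hη : IsProbabilityMeasure η)
    (c : ℝ≥0)
    (μ : ℕ → Measure (X × X)) (hμprob : ∀ n, IsProbabilityMeasure (μ n))
    -- the first marginal of μ_n is dominated by c·η
    (hmarg : ∀ n, (μ n).map Prod.fst ≤ c • η)
    -- μ_n(A × (X∖A)) → 0 for every measurable A ⊆ X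
    (hsplit : ∀ A : Set X, MeasurableSet A →
      Tendsto (fun n => ((μ n) (A ×ˢ Aᶜ)).toReal) atTop (𝓝 0))
    -- a countable measurable partition {B_i} of X
    (B : ℕ → Set X) (hBmeas : ∀ i, MeasurableSet (B i))
    (hBdisj : Pairwise (Function.onFun Disjoint B)) (hBcover : ⋃ i, B i = Set.univ) :
    Tendsto (fun n => ((μ n) (⋃ i, B i ×ˢ B i)).toReal) atTop (𝓝 1) := by
  have hsplit' (i : ℕ) : Tendsto (fun n => μ n (B i ×ˢ (B i)ᶜ)) atTop (𝓝 0) :=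
    (ENNReal.tendsto_toReal_iff (fun n => measure_ne_top _ _) ENNReal.zero_ne_top).mp
      (hsplit (B i) (hBmeas i))
  have hoff := tendsto_measure_iUnion_prod_zero_of_map_fst_le hmarg hBmeas hBdisj _ hsplit'
  have hdiag (n : ℕ) : μ n (⋃ i, B i ×ˢ B i) = 1 - μ n (⋃ i, B i ×ˢ (B i)ᶜ) := by
    rw [← compl_iUnion_prod_self_eq_iUnion_prod_compl hBdisj hBcover,
      prob_compl_eq_one_sub (MeasurableSet.iUnion fun i => (hBmeas i).prod (hBmeas i)),
      ENNReal.sub_sub_cancel ENNReal.one_ne_top prob_le_one]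
  have hdiag' : Tendsto (fun n => μ n (⋃ i, B i ×ˢ B i)) atTop (𝓝 1) := by
    simpa [hdiag] using ENNReal.Tendsto.sub tendsto_const_nhds hoff (Or.inl ENNReal.one_ne_top)
  exact (ENNReal.tendsto_toReal ENNReal.one_ne_top).comp hdiag'

theorem partition_claim
    (X : Type*) [MeasurableSpace X]
    (η : Measure X) (hη : IsProbabilityMeasure η)
    (c : ℝ≥0) (hc : 0 < c)
    (μ : ℕ → Measure (X × X)) (hμprob : ∀ n, IsProbabilityMeasure (μ n))
    -- the first marginal of μ_n is dominated by c·η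
    (hmarg : ∀ n, (μ n).map Prod.fst ≤ c • η)
    -- μ_n(A × (X∖A)) → 0 for every measurable A ⊆ X
    (hsplit : ∀ A : Set X, MeasurableSet A →
      Tendsto (fun n => ((μ n) (A ×ˢ Aᶜ)).toReal) atTop (𝓝 0))
    -- a countable measurable partition {B_i} of X
    (B : ℕ → Set X) (hBmeas : ∀ i, MeasurableSet (B i))
    (hBdisj : Pairwise (Function.onFun Disjoint B)) (hBcover : ⋃ i, B i = Set.univ) :
    Tendsto (fun n => ((μ n) (⋃ i, B i ×ˢ B i)).toReal) atTop (𝓝 1) :=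
  partition_claim_general X η hη c μ hμprob hmarg hsplit B hBmeas hBdisj hBcover
end

section
/- Let G be a second-countable topological group equipped with its Borel σ-algebra, X ⊆ G a Borel set, η a Borel probability measure on X, c > 0, and (μ_n) a sequence of Borel probability measures on X × X such that the first marginal of μ_n is dominated by c·η for all n, and μ_n(A × (X∖A)) → 0 for every Borel subset A ⊆ X. Then for every neighborhood V of the identity in G, μ_n( {(x,y) ∈ X × X : x y⁻¹ ∈ V} ) → 1 as n → ∞. -/
/-!
Cover `G` by countably many translates `W * {gᵢ}` of a closed symmetric neighbourhood `W` of `1`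
with `W * W ⊆ V`, which is possible because `G` is separable. Pulled back to `X` these are Borel
sets `Aᵢ` with `Aᵢ ×ˢ Aᵢ ⊆ B`. A pair outside `B` either has its first coordinate in some `Aᵢ`,
`i ≤ N`, and its second outside it, or its first coordinate outside `A₀ ∪ ⋯ ∪ A_N`. The first event
has `μₙ`-measure tending to `0` by hypothesis; by the marginal bound the second has `μₙ`-measure
at most `c • η (A₀ ∪ ⋯ ∪ A_N)ᶜ`, which is small for large `N` uniformly in `n`.
-/

open MeasureTheory Filter Topology Set
open scoped NNReal ENNReal Pointwise

theorem exists_seq_isClosed_cover_of_mem_nhds_one {G : Type*} [Group G] [TopologicalSpace G]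
    [IsTopologicalGroup G] [TopologicalSpace.SeparableSpace G] {V : Set G} (hV : V ∈ 𝓝 (1 : G)) :
    ∃ A : ℕ → Set G, (∀ i, IsClosed (A i)) ∧ ⋃ i, A i = univ ∧
      ∀ i, ∀ x ∈ A i, ∀ y ∈ A i, x * y⁻¹ ∈ V := by
  obtain ⟨W, hW1, hWc, hWinv, hWV⟩ := exists_closed_nhds_one_inv_eq_mul_subset hV
  obtain ⟨g, hg⟩ := TopologicalSpace.exists_dense_seq G
  refine ⟨fun i => (· * (g i)⁻¹) ⁻¹' W, fun i => hWc.preimage (continuous_mul_const _),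
    eq_univ_of_forall fun x => ?_, fun i x hx y hy => ?_⟩
  · have hnhds : (fun h => x * h⁻¹) ⁻¹' W ∈ 𝓝 x :=
      (continuous_const.mul continuous_inv).continuousAt.preimage_mem_nhds (by simpa using hW1)
    obtain ⟨_, ⟨i, rfl⟩, hi⟩ := hg.inter_nhds_nonempty hnhds
    exact mem_iUnion.2 ⟨i, hi⟩
  · have : (x * (g i)⁻¹) * (y * (g i)⁻¹)⁻¹ ∈ W * W⁻¹ := mul_mem_mul hx (inv_mem_inv.2 hy)
    rw [hWinv] at this
    simpa [mul_assoc] using hWV this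

section

variable {α : Type*} [MeasurableSpace α]

theorem measure_prod_univ_le_of_map_fst_le_s5 {β : Type*} [MeasurableSpace β]
    {μ : Measure (α × β)} {ν : Measure α} (h : μ.map Prod.fst ≤ ν) {s : Set α}
    (hs : MeasurableSet s) : μ (s ×ˢ univ) ≤ ν s := by
  rw [prod_univ, ← Measure.map_apply measurable_fst hs]
  exact h s

theorem measurableSet_accumulate {A : ℕ → Set α}
    (hA : ∀ i, MeasurableSet (A i)) (N : ℕ) : MeasurableSet (accumulate A N) :=
  MeasurableSet.biUnion (to_countable _) fun i _ => hA i

theorem tendsto_measure_compl_accumulate (ν : Measure α)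
    [IsFiniteMeasure ν] {A : ℕ → Set α} (hA : ∀ i, MeasurableSet (A i)) (hcover : ⋃ i, A i = univ) :
    Tendsto (fun N => ν (accumulate A N)ᶜ) atTop (𝓝 0) := by
  have hinter : ⋂ N, (accumulate A N)ᶜ = ∅ := by
    rw [← compl_iUnion, iUnion_accumulate, hcover, compl_univ]
  have h := tendsto_measure_iInter_atTop (μ := ν) (s := fun N => (accumulate A N)ᶜ)
    (fun N => (measurableSet_accumulate hA N).compl.nullMeasurableSet)
    (fun _ _ hMN => compl_subset_compl.2 (monotone_accumulate hMN)) ⟨0, measure_ne_top _ _⟩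
  rwa [hinter, measure_empty] at h

theorem measure_compl_le_of_map_fst_le {μ : Measure (α × α)}
    {ν : Measure α} (hmarg : μ.map Prod.fst ≤ ν) {A : ℕ → Set α} (hA : ∀ i, MeasurableSet (A i))
    {B : Set (α × α)} (hB : ∀ i, A i ×ˢ A i ⊆ B) (N : ℕ) :
    μ Bᶜ ≤ ∑ i ∈ Finset.Iic N, μ (A i ×ˢ (A i)ᶜ) + ν (accumulate A N)ᶜ := by
  have hsub : Bᶜ ⊆ (⋃ i ∈ Finset.Iic N, A i ×ˢ (A i)ᶜ) ∪ (accumulate A N)ᶜ ×ˢ univ := by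
    rintro ⟨x, y⟩ hxy
    by_cases hx : x ∈ accumulate A N
    · obtain ⟨i, hiN, hxi⟩ := mem_accumulate.1 hx
      exact Or.inl (mem_biUnion (Finset.mem_Iic.2 hiN) ⟨hxi, fun hyi => hxy (hB i ⟨hxi, hyi⟩)⟩)
    · exact Or.inr ⟨hx, mem_univ y⟩
  calc μ Bᶜ ≤ μ (⋃ i ∈ Finset.Iic N, A i ×ˢ (A i)ᶜ) + μ ((accumulate A N)ᶜ ×ˢ univ) :=
        (measure_mono hsub).trans (measure_union_le _ _)
    _ ≤ _ := add_le_add (measure_biUnion_finset_le _ _) <|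
        measure_prod_univ_le_of_map_fst_le_s5 hmarg
          (measurableSet_accumulate hA N).compl

theorem tendsto_measure_compl_of_map_fst_le {ι : Type*} {l : Filter ι}
    {ν : Measure α} [IsFiniteMeasure ν] {μ : ι → Measure (α × α)}
    (hmarg : ∀ n, (μ n).map Prod.fst ≤ ν)
    (hsplit : ∀ A, MeasurableSet A → Tendsto (fun n => μ n (A ×ˢ Aᶜ)) l (𝓝 0))
    {A : ℕ → Set α} (hA : ∀ i, MeasurableSet (A i)) (hcover : ⋃ i, A i = univ)
    {B : Set (α × α)} (hB : ∀ i, A i ×ˢ A i ⊆ B) :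
    Tendsto (fun n => μ n Bᶜ) l (𝓝 0) := by
  rw [ENNReal.tendsto_nhds_zero]
  intro ε hε
  have hε2 : (0 : ℝ≥0∞) < ε / 2 := ENNReal.half_pos hε.ne'
  obtain ⟨N, hN⟩ :=
    ((tendsto_measure_compl_accumulate ν hA hcover).eventually (eventually_le_nhds hε2)).exists
  have hsum : Tendsto (fun n => ∑ i ∈ Finset.Iic N, μ n (A i ×ˢ (A i)ᶜ)) l (𝓝 0) := by
    simpa using tendsto_finsetSum _ fun i _ => hsplit (A i) (hA i)
  filter_upwards [hsum.eventually (eventually_le_nhds hε2)] with n hn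
  calc μ n Bᶜ ≤ ∑ i ∈ Finset.Iic N, μ n (A i ×ˢ (A i)ᶜ) + ν (accumulate A N)ᶜ :=
        measure_compl_le_of_map_fst_le (hmarg n) hA hB N
    _ ≤ ε / 2 + ε / 2 := add_le_add hn hN
    _ = ε := ENNReal.add_halves ε

theorem tendsto_measure_toReal_of_tendsto_measure_compl {ι : Type*} {l : Filter ι} {μ : ι → Measure α} [∀ i, IsProbabilityMeasure (μ i)] {s : Set α}
    (h : Tendsto (fun i => μ i sᶜ) l (𝓝 0)) : Tendsto (fun i => (μ i s).toReal) l (𝓝 1) := by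
  have hlower : ∀ i, 1 - μ i sᶜ ≤ μ i s := fun i => tsub_le_iff_right.2 <| by
    simpa [measure_univ] using measure_union_le (μ := μ i) s sᶜ
  have hlim : Tendsto (fun i => 1 - μ i sᶜ) l (𝓝 1) := by
    simpa using ENNReal.Tendsto.sub tendsto_const_nhds h (Or.inl ENNReal.one_ne_top)
  simpa [Function.comp_def] using (ENNReal.tendsto_toReal ENNReal.one_ne_top).comp <|
    tendsto_of_tendsto_of_tendsto_of_le_of_le hlim tendsto_const_nhds hlower fun i => prob_le_one

end

theorem neighborhood_claim_general
    -- G a second-countable topological group with its Borel σ-algebra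
    (G : Type*) [Group G] [TopologicalSpace G] [IsTopologicalGroup G]
    [SecondCountableTopology G] [MeasurableSpace G] [BorelSpace G]
    -- X ⊆ G a Borel set with a Borel probability measure η
    (X : Set G)
    (η : Measure X) (hη : IsProbabilityMeasure η)
    (c : ℝ≥0)
    (μ : ℕ → Measure (X × X)) (hμprob : ∀ n, IsProbabilityMeasure (μ n))
    -- the first marginal of μ_n is dominated by c·η
    (hmarg : ∀ n, (μ n).map Prod.fst ≤ c • η)
    -- μ_n(A × (X∖A)) → 0 for every Borel A ⊆ X
    (hsplit : ∀ A : Set X, MeasurableSet A →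
      Tendsto (fun n => ((μ n) (A ×ˢ Aᶜ)).toReal) atTop (𝓝 0))
    -- V a neighborhood of the identity
    (V : Set G) (hV : V ∈ 𝓝 (1 : G)) :
    Tendsto (fun n => ((μ n) {p : X × X | (p.1 : G) * ((p.2 : G))⁻¹ ∈ V}).toReal)
      atTop (𝓝 1) := by
  obtain ⟨A, hAc, hAcover, hAV⟩ := exists_seq_isClosed_cover_of_mem_nhds_one hV
  have hsplit' : ∀ A : Set X, MeasurableSet A → Tendsto (fun n => μ n (A ×ˢ Aᶜ)) atTop (𝓝 0) :=
    fun A hA => (ENNReal.tendsto_toReal_zero_iff fun n => measure_ne_top _ _).1 (hsplit A hA)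
  refine tendsto_measure_toReal_of_tendsto_measure_compl <|
    tendsto_measure_compl_of_map_fst_le hmarg hsplit' (A := fun i => Subtype.val ⁻¹' A i)
      (fun i => measurable_subtype_coe (hAc i).measurableSet) ?_ ?_
  · rw [← preimage_iUnion, hAcover, preimage_univ]
  · rintro i ⟨x, y⟩ ⟨hx, hy⟩
    exact hAV i x hx y hy

theorem neighborhood_claim
    -- G a second-countable topological group with its Borel σ-algebra
    (G : Type*) [Group G] [TopologicalSpace G] [IsTopologicalGroup G]
    [SecondCountableTopology G] [MeasurableSpace G] [BorelSpace G]
    -- X ⊆ G a Borel set with a Borel probability measure η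
    (X : Set G) (hX : MeasurableSet X)
    (η : Measure X) (hη : IsProbabilityMeasure η)
    (c : ℝ≥0) (hc : 0 < c)
    (μ : ℕ → Measure (X × X)) (hμprob : ∀ n, IsProbabilityMeasure (μ n))
    -- the first marginal of μ_n is dominated by c·η
    (hmarg : ∀ n, (μ n).map Prod.fst ≤ c • η)
    -- μ_n(A × (X∖A)) → 0 for every Borel A ⊆ X
    (hsplit : ∀ A : Set X, MeasurableSet A →
      Tendsto (fun n => ((μ n) (A ×ˢ Aᶜ)).toReal) atTop (𝓝 0))
    -- V a neighborhood of the identity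
    (V : Set G) (hV : V ∈ 𝓝 (1 : G)) :
    Tendsto (fun n => ((μ n) {p : X × X | (p.1 : G) * ((p.2 : G))⁻¹ ∈ V}).toReal)
      atTop (𝓝 1) :=
  neighborhood_claim_general G X η hη c μ hμprob hmarg hsplit V hV
end

section
/- Let X be a measurable space, η a probability measure on X, c > 0, and (μ_n) a sequence of probability measures on X × X such that the first marginal of μ_n is dominated by c·η for all n, and μ_n(A × (X∖A)) → 0 for every measurable subset A ⊆ X. Then for every countable set I (with the discrete σ-algebra) and every measurable map φ : X → I, one has μ_n( {(x,y) ∈ X × X : φ(x) = φ(y)} ) → 1 as n → ∞. -/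
/-!
A pair `(x, y)` with `φ x ≠ φ y` lies in exactly one of the sets `Aᵢ ×ˢ Aᵢᶜ`, `Aᵢ = φ ⁻¹' {i}`,
so `μₙ {φ x ≠ φ y} = ∑ᵢ μₙ (Aᵢ ×ˢ Aᵢᶜ)`. Each term tends to `0` by hypothesis and is bounded by
`c η(Aᵢ)`, which is summable because the `Aᵢ` are disjoint; Tannery's theorem (dominated
convergence for series) therefore sends the sum to `0`.
-/

open MeasureTheory Filter Topology Function
open scoped NNReal ENNReal

lemma compl_setOf_comp_fst_eq_comp_snd {X I : Type*} (φ : X → I) :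
    {p : X × X | φ p.1 = φ p.2}ᶜ = ⋃ i, (φ ⁻¹' {i}) ×ˢ (φ ⁻¹' {i})ᶜ := by
  ext p
  simp [eq_comm]

namespace MeasureTheory

variable {X Y I : Type*} [MeasurableSpace X] [MeasurableSpace Y] [Countable I]

lemma measure_prod_le_of_map_fst_le {μ : Measure (X × Y)} {ν : Measure X}
    (h : μ.map Prod.fst ≤ ν) (s : Set X) (t : Set Y) : μ (s ×ˢ t) ≤ ν s :=
  calc μ (s ×ˢ t) ≤ μ (Prod.fst ⁻¹' s) := measure_mono (Set.prod_subset_preimage_fst s t)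
    _ ≤ μ.map Prod.fst s := Measure.le_map_apply measurable_fst.aemeasurable s
    _ ≤ ν s := h s

lemma measureReal_iUnion_of_ne_top {μ : Measure X} {s : I → Set X}
    (hd : Pairwise (Disjoint on s)) (hs : ∀ i, MeasurableSet (s i)) (hfin : ∀ i, μ (s i) ≠ ∞) :
    μ.real (⋃ i, s i) = ∑' i, μ.real (s i) := by
  rw [measureReal_def, measure_iUnion hd hs, ENNReal.tsum_toReal_eq hfin]
  rfl

lemma summable_measureReal_of_pairwise_disjoint {μ : Measure X} [IsFiniteMeasure μ]
    {s : I → Set X} (hd : Pairwise (Disjoint on s)) (hs : ∀ i, MeasurableSet (s i)) :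
    Summable fun i => μ.real (s i) := by
  refine ENNReal.summable_toReal ?_
  rw [← measure_iUnion hd hs]
  exact measure_ne_top μ _

lemma tendsto_measureReal_iUnion_prod {α : Type*} {l : Filter α} {μ : α → Measure (X × Y)}
    {ν : Measure X} [IsFiniteMeasure ν] (hmarg : ∀ a, (μ a).map Prod.fst ≤ ν)
    {A : I → Set X} {B : I → Set Y} (hd : Pairwise (Disjoint on A))
    (hA : ∀ i, MeasurableSet (A i)) (hB : ∀ i, MeasurableSet (B i))
    (hlim : ∀ i, Tendsto (fun a => (μ a).real (A i ×ˢ B i)) l (𝓝 0)) :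
    Tendsto (fun a => (μ a).real (⋃ i, A i ×ˢ B i)) l (𝓝 0) := by
  have hprod_fin (a : α) (i : I) : μ a (A i ×ˢ B i) ≠ ∞ :=
    ne_top_of_le_ne_top (measure_ne_top ν (A i)) (measure_prod_le_of_map_fst_le (hmarg a) _ _)
  have hsum (a : α) : (μ a).real (⋃ i, A i ×ˢ B i) = ∑' i, (μ a).real (A i ×ˢ B i) :=
    measureReal_iUnion_of_ne_top
      (fun i j hij => Set.disjoint_prod.2 (Or.inl (hd hij))) (fun i => (hA i).prod (hB i))
      (hprod_fin a)
  simp only [hsum]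
  simpa only [tsum_zero] using tendsto_tsum_of_dominated_convergence
    (summable_measureReal_of_pairwise_disjoint hd hA) hlim (Eventually.of_forall fun a i => by
      rw [Real.norm_of_nonneg measureReal_nonneg]
      exact ENNReal.toReal_mono (measure_ne_top ν _) (measure_prod_le_of_map_fst_le (hmarg a) _ _))

end MeasureTheory

theorem countable_level_sets_claim_general
    (X : Type*) [MeasurableSpace X]
    (η : Measure X) (hη : IsProbabilityMeasure η)
    (c : ℝ≥0)
    (μ : ℕ → Measure (X × X)) (hμprob : ∀ n, IsProbabilityMeasure (μ n))
    -- the first marginal of μ_n is dominated by c·η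
    (hmarg : ∀ n, (μ n).map Prod.fst ≤ c • η)
    -- μ_n(A × (X∖A)) → 0 for every measurable A ⊆ X
    (hsplit : ∀ A : Set X, MeasurableSet A →
      Tendsto (fun n => ((μ n) (A ×ˢ Aᶜ)).toReal) atTop (𝓝 0))
    -- a countable set I (with the discrete σ-algebra) and a measurable map φ : X → I,
    -- i.e. all level sets of φ are measurable
    (I : Type*) [Countable I]
    (φ : X → I) (hφ : ∀ i : I, MeasurableSet (φ ⁻¹' {i})) :
    Tendsto (fun n => ((μ n) {p : X × X | φ p.1 = φ p.2}).toReal) atTop (𝓝 1) := by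
  have hcompl := compl_setOf_comp_fst_eq_comp_snd φ
  have hmeas : MeasurableSet {p : X × X | φ p.1 = φ p.2}ᶜ :=
    hcompl ▸ .iUnion fun i => (hφ i).prod (hφ i).compl
  have hoff_diag : Tendsto (fun n => (μ n).real {p : X × X | φ p.1 = φ p.2}ᶜ) atTop (𝓝 0) := by
    rw [hcompl]
    exact tendsto_measureReal_iUnion_prod hmarg (pairwise_disjoint_fiber φ) hφ
      (fun i => (hφ i).compl) fun i => hsplit _ (hφ i)
  have hdiag (n : ℕ) : 1 - (μ n).real {p : X × X | φ p.1 = φ p.2}ᶜ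
      = ((μ n) {p : X × X | φ p.1 = φ p.2}).toReal := by
    rw [← probReal_compl_eq_one_sub hmeas, compl_compl, measureReal_def]
  simpa only [sub_zero, hdiag] using hoff_diag.const_sub 1

theorem countable_level_sets_claim
    (X : Type*) [MeasurableSpace X]
    (η : Measure X) (hη : IsProbabilityMeasure η)
    (c : ℝ≥0) (hc : 0 < c)
    (μ : ℕ → Measure (X × X)) (hμprob : ∀ n, IsProbabilityMeasure (μ n))
    -- the first marginal of μ_n is dominated by c·η
    (hmarg : ∀ n, (μ n).map Prod.fst ≤ c • η)
    -- μ_n(A × (X∖A)) → 0 for every measurable A ⊆ X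
    (hsplit : ∀ A : Set X, MeasurableSet A →
      Tendsto (fun n => ((μ n) (A ×ˢ Aᶜ)).toReal) atTop (𝓝 0))
    -- a countable set I (with the discrete σ-algebra) and a measurable map φ : X → I,
    -- i.e. all level sets of φ are measurable
    (I : Type*) [Countable I]
    (φ : X → I) (hφ : ∀ i : I, MeasurableSet (φ ⁻¹' {i})) :
    Tendsto (fun n => ((μ n) {p : X × X | φ p.1 = φ p.2}).toReal) atTop (𝓝 1) :=
  countable_level_sets_claim_general X η hη c μ hμprob hmarg hsplit I φ hφ
end

section
/- Let X be a standard Borel space, η a Borel probability measure on X, and Δ = {(x,x) : x ∈ X} the diagonal in X × X. Let (ν_n) be a sequence of Borel probability measures on X × X such that the first marginal of each ν_n equals η and ∫ f(x) g(y) dν_n(x,y) → ∫ f g dη for all bounded Borel functions f, g : X → ℝ. Suppose c > 0 is such that c_n := 1 − ν_n(Δ) ≥ c for all n, and define μ_n(A) = c_n⁻¹ · ν_n(A ∖ Δ) for Borel sets A ⊆ X × X. Then each μ_n is a Borel probability measure on X × X satisfying: μ_n(Δ) = 0; the first marginal of μ_n is dominated by c⁻¹·η; and μ_n(A × (X∖A))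 → 0 for every Borel subset A ⊆ X. -/
/-!
Since `Δ` is measurable, `μ_n` is the conditional measure `ν_n[|Δᶜ]`, a probability measure
carried by `Δᶜ` and dominated by `c⁻¹ • ν_n`. Testing the convergence hypothesis on
`f = 1_A`, `g = 1_{Aᶜ}` gives
`ν_n (A ×ˢ Aᶜ) → ∫ 1_A 1_{Aᶜ} dη = 0`.
-/

open MeasureTheory ProbabilityTheory Filter Topology
open scoped NNReal ENNReal

section

variable {Ω : Type*} [MeasurableSpace Ω] {ν : Measure Ω} {s : Set Ω}

lemma ofReal_one_sub_toReal_eq_measure_compl [IsProbabilityMeasure ν] (hs : MeasurableSet s) :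
    ENNReal.ofReal (1 - (ν s).toReal) = ν sᶜ := by
  rw [← measureReal_def, ← probReal_compl_eq_one_sub hs, ofReal_measureReal]

lemma inv_smul_restrict_compl_eq_cond [IsProbabilityMeasure ν] (hs : MeasurableSet s) :
    (ENNReal.ofReal (1 - (ν s).toReal))⁻¹ • ν.restrict sᶜ = ν[|sᶜ] := by
  rw [ofReal_one_sub_toReal_eq_measure_compl hs]
  rfl

lemma cond_le_inv_smul_of_le {ε : ℝ≥0∞} (hε : ε ≤ ν s) : ν[|s] ≤ ε⁻¹ • ν :=
  calc ν[|s] = (ν s)⁻¹ • ν.restrict s := rfl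
    _ ≤ ε⁻¹ • ν := by
        gcongr
        exact Measure.restrict_le_self

end

lemma tendsto_measureReal_of_le_smul {α : Type*} [MeasurableSpace α]
    {μ ν : ℕ → Measure α} [∀ n, IsFiniteMeasure (ν n)] {K : ℝ≥0∞} (hK : K ≠ ∞)
    (hle : ∀ n, μ n ≤ K • ν n)
    {s : Set α} (hν : Tendsto (fun n => (ν n).real s) atTop (𝓝 0)) :
    Tendsto (fun n => (μ n).real s) atTop (𝓝 0) := by
  refine squeeze_zero (fun n => measureReal_nonneg) (fun n => ?_)
    (by simpa using hν.const_mul K.toReal)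
  calc (μ n).real s ≤ (K * ν n s).toReal :=
        ENNReal.toReal_mono (ENNReal.mul_ne_top hK (measure_ne_top _ _)) (hle n s)
    _ = K.toReal * (ν n).real s := ENNReal.toReal_mul

lemma integral_indicator_one_mul_indicator_one {α β : Type*} [MeasurableSpace α]
    [MeasurableSpace β] (ν : Measure (α × β)) {s : Set α} {t : Set β}
    (hs : MeasurableSet s) (ht : MeasurableSet t) :
    ∫ p, s.indicator (1 : α → ℝ) p.1 * t.indicator 1 p.2 ∂ν = ν.real (s ×ˢ t) := by
  simp_rw [← Set.indicator_prod_one, integral_indicator_one (hs.prod ht)]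

lemma abs_indicator_one_le_one {α : Type*} (s : Set α) (x : α) :
    |s.indicator (1 : α → ℝ) x| ≤ 1 := by
  by_cases h : x ∈ s <;> simp [h]

theorem offdiagonal_normalization_general
    (X : Type*) [MeasurableSpace X] [StandardBorelSpace X]
    (η : Measure X)
    (ν : ℕ → Measure (X × X)) (hνprob : ∀ n, IsProbabilityMeasure (ν n))
    -- the first marginal of each ν_n equals η
    (hmarg : ∀ n, (ν n).map Prod.fst = η)
    -- ∫ f(x) g(y) dν_n(x,y) → ∫ f g dη for all bounded Borel f, g
    (hconv : ∀ f g : X → ℝ, Measurable f → Measurable g →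
      (∃ C, ∀ z, |f z| ≤ C) → (∃ C, ∀ z, |g z| ≤ C) →
      Tendsto (fun n => ∫ p, f p.1 * g p.2 ∂(ν n)) atTop (𝓝 (∫ z, f z * g z ∂η)))
    -- c > 0 with c_n := 1 − ν_n(Δ) ≥ c for all n
    (c : ℝ) (hc : 0 < c)
    (hcn : ∀ n, c ≤ 1 - ((ν n) (Set.diagonal X)).toReal)
    -- μ_n(A) = c_n⁻¹ · ν_n(A ∖ Δ)
    (μ : ℕ → Measure (X × X))
    (hμdef : ∀ n, μ n = (ENNReal.ofReal (1 - ((ν n) (Set.diagonal X)).toReal))⁻¹ •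
      ((ν n).restrict (Set.diagonal X)ᶜ)) :
    (∀ n, IsProbabilityMeasure (μ n)) ∧
    (∀ n, μ n (Set.diagonal X) = 0) ∧
    (∀ n, (μ n).map Prod.fst ≤ (ENNReal.ofReal c)⁻¹ • η) ∧
    (∀ A : Set X, MeasurableSet A →
      Tendsto (fun n => ((μ n) (A ×ˢ Aᶜ)).toReal) atTop (𝓝 0)) := by
  have hΔ : MeasurableSet (Set.diagonal X) := measurableSet_diagonal
  have hμ_cond n : μ n = (ν n)[|(Set.diagonal X)ᶜ] := by
    rw [hμdef n, inv_smul_restrict_compl_eq_cond hΔ]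
  have hc_le n : ENNReal.ofReal c ≤ ν n (Set.diagonal X)ᶜ := by
    rw [← ofReal_one_sub_toReal_eq_measure_compl hΔ]
    exact ENNReal.ofReal_le_ofReal (hcn n)
  have hμ_le n : μ n ≤ (ENNReal.ofReal c)⁻¹ • ν n :=
    (hμ_cond n).trans_le (cond_le_inv_smul_of_le (hc_le n))
  refine ⟨fun n => ?_, fun n => ?_, fun n => ?_, fun A hA => ?_⟩
  · rw [hμ_cond n]
    exact cond_isProbabilityMeasure ((ENNReal.ofReal_pos.2 hc).trans_le (hc_le n)).ne'
  · simp [hμ_cond n, cond_apply hΔ.compl]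
  · calc (μ n).map Prod.fst ≤ ((ENNReal.ofReal c)⁻¹ • ν n).map Prod.fst :=
          Measure.map_mono (hμ_le n) measurable_fst
      _ = (ENNReal.ofReal c)⁻¹ • η := by rw [Measure.map_smul, hmarg n]
  · refine tendsto_measureReal_of_le_smul (by simpa using hc) hμ_le ?_
    have hνA := hconv (A.indicator 1) (Aᶜ.indicator 1) (measurable_one.indicator hA)
      (measurable_one.indicator hA.compl) ⟨1, abs_indicator_one_le_one A⟩
      ⟨1, abs_indicator_one_le_one Aᶜ⟩
    have hdisj (z : X) : A.indicator (1 : X → ℝ) z * Aᶜ.indicator 1 z = 0 := by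
      by_cases h : z ∈ A <;> simp [h]
    simpa [integral_indicator_one_mul_indicator_one _ hA hA.compl, hdisj] using hνA

theorem offdiagonal_normalization
    (X : Type*) [MeasurableSpace X] [StandardBorelSpace X]
    (η : Measure X) (hη : IsProbabilityMeasure η)
    (ν : ℕ → Measure (X × X)) (hνprob : ∀ n, IsProbabilityMeasure (ν n))
    -- the first marginal of each ν_n equals η
    (hmarg : ∀ n, (ν n).map Prod.fst = η)
    -- ∫ f(x) g(y) dν_n(x,y) → ∫ f g dη for all bounded Borel f, g
    (hconv : ∀ f g : X → ℝ, Measurable f → Measurable g →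
      (∃ C, ∀ z, |f z| ≤ C) → (∃ C, ∀ z, |g z| ≤ C) →
      Tendsto (fun n => ∫ p, f p.1 * g p.2 ∂(ν n)) atTop (𝓝 (∫ z, f z * g z ∂η)))
    -- c > 0 with c_n := 1 − ν_n(Δ) ≥ c for all n
    (c : ℝ) (hc : 0 < c)
    (hcn : ∀ n, c ≤ 1 - ((ν n) (Set.diagonal X)).toReal)
    -- μ_n(A) = c_n⁻¹ · ν_n(A ∖ Δ)
    (μ : ℕ → Measure (X × X))
    (hμdef : ∀ n, μ n = (ENNReal.ofReal (1 - ((ν n) (Set.diagonal X)).toReal))⁻¹ •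
      ((ν n).restrict (Set.diagonal X)ᶜ)) :
    (∀ n, IsProbabilityMeasure (μ n)) ∧
    (∀ n, μ n (Set.diagonal X) = 0) ∧
    (∀ n, (μ n).map Prod.fst ≤ (ENNReal.ofReal c)⁻¹ • η) ∧
    (∀ A : Set X, MeasurableSet A →
      Tendsto (fun n => ((μ n) (A ×ˢ Aᶜ)).toReal) atTop (𝓝 0)) :=
  offdiagonal_normalization_general X η ν hνprob hmarg hconv c hc hcn μ hμdef
end

section
/- Let Z be a Polish space, T : Z → Z a Borel map, and ζ_n, ζ Borel probability measures on Z such that ζ_n → ζ weakly and ‖T_*ζ_n − ζ_n‖ → 0, where ‖·‖ is the total variation norm. Assume that for every ε > 0 there exists a closed set Z₀ ⊆ Z such that the restriction of T to Z₀ is continuous, ζ(Z ∖ Z₀) ≤ ε, and ζ_n(Z ∖ Z₀) ≤ ε for all n. Then T_*ζ = ζ. -/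
open MeasureTheory Filter Topology BoundedContinuousFunction

/-- The total variation distance `‖μ - ν‖` between two (finite) Borel measures:
for probability measures `μ, ν` this is exactly the total variation norm of the signed
measure `μ - ν`, namely `2 · sup_A |μ(A) - ν(A)|` over measurable sets `A`. -/
noncomputable def tvDist {Z : Type*} [MeasurableSpace Z] (μ ν : Measure Z) : ℝ :=
  2 * ⨆ A : {s : Set Z // MeasurableSet s}, |(μ A.1).toReal - (ν A.1).toReal|

/-!
Test both measures against bounded continuous `f`. Small total variation gives
`∫ f ∘ T dζₙ - ∫ f dζₙ → 0`, and weak convergence gives `∫ f dζₙ → ∫ f dζ`. The Lusin hypothesis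
upgrades weak convergence to `∫ f ∘ T dζₙ → ∫ f ∘ T dζ`: on a closed set `Z₀` where `T` is
continuous, Tietze extends `f ∘ T` to a bounded continuous `g` with `‖g‖ ≤ ‖f‖`, and `f ∘ T`
differs from `g` only on `Z₀ᶜ`, which is uniformly small for all the measures. Hence
`∫ f ∘ T dζ = ∫ f dζ` for every `f`, so `T_*ζ = ζ`.
-/

open scoped NNReal

section TotalVariation

variable {Z : Type*} [MeasurableSpace Z] (μ ν : Measure Z) [IsFiniteMeasure μ] [IsFiniteMeasure ν]

lemma two_mul_abs_measureReal_sub_le_tvDist {A : Set Z} (hA : MeasurableSet A) :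
    2 * |μ.real A - ν.real A| ≤ tvDist μ ν := by
  refine mul_le_mul_of_nonneg_left (le_ciSup (f := fun B : {s : Set Z // MeasurableSet s} =>
    |μ.real B.1 - ν.real B.1|) ⟨μ.real Set.univ + ν.real Set.univ, ?_⟩ ⟨A, hA⟩) zero_le_two
  rintro _ ⟨B, rfl⟩
  refine (abs_sub _ _).trans ?_
  simp only [abs_of_nonneg measureReal_nonneg]
  exact add_le_add (measureReal_mono (Set.subset_univ _)) (measureReal_mono (Set.subset_univ _))

lemma setIntegral_toReal_rnDeriv_sub {ξ : Measure Z} [IsFiniteMeasure ξ] (hμ : μ ≪ ξ) (hν : ν ≪ ξ)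
    {A : Set Z} (hA : MeasurableSet A) :
    ∫ x in A, ((μ.rnDeriv ξ x).toReal - (ν.rnDeriv ξ x).toReal) ∂ξ = μ.real A - ν.real A := by
  rw [integral_sub Measure.integrable_toReal_rnDeriv.integrableOn
    Measure.integrable_toReal_rnDeriv.integrableOn, Measure.setIntegral_toReal_rnDeriv' hμ hA,
    Measure.setIntegral_toReal_rnDeriv' hν hA]

lemma integral_abs_toReal_rnDeriv_sub_le_tvDist :
    ∫ x, |(μ.rnDeriv (μ + ν) x).toReal - (ν.rnDeriv (μ + ν) x).toReal| ∂(μ + ν)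
      ≤ tvDist μ ν := by
  set p := fun x => (μ.rnDeriv (μ + ν) x).toReal
  set q := fun x => (ν.rnDeriv (μ + ν) x).toReal
  have hμ : μ ≪ μ + ν := Measure.absolutelyContinuous_of_le (Measure.le_add_right le_rfl)
  have hν : ν ≪ μ + ν := Measure.absolutelyContinuous_of_le (Measure.le_add_left le_rfl)
  set A := {x | ν.rnDeriv (μ + ν) x ≤ μ.rnDeriv (μ + ν) x}
  have hA : MeasurableSet A :=
    measurableSet_le (Measure.measurable_rnDeriv _ _) (Measure.measurable_rnDeriv _ _)
  have h_on : ∫ x in A, |p x - q x| ∂(μ + ν) = μ.real A - ν.real A := by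
    rw [← setIntegral_toReal_rnDeriv_sub μ ν hμ hν hA]
    refine setIntegral_congr_ae hA ?_
    filter_upwards [Measure.rnDeriv_lt_top μ (μ + ν)] with x hx hxA
    exact abs_of_nonneg (sub_nonneg.mpr (ENNReal.toReal_mono hx.ne hxA))
  have h_off : ∫ x in Aᶜ, |p x - q x| ∂(μ + ν) = ν.real Aᶜ - μ.real Aᶜ := by
    rw [← setIntegral_toReal_rnDeriv_sub ν μ hν hμ hA.compl]
    refine setIntegral_congr_ae hA.compl ?_
    filter_upwards [Measure.rnDeriv_lt_top ν (μ + ν)] with x hx hxA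
    have hlt : μ.rnDeriv (μ + ν) x < ν.rnDeriv (μ + ν) x := not_le.mp hxA
    rw [abs_sub_comm]
    exact abs_of_nonneg (sub_nonneg.mpr (ENNReal.toReal_mono hx.ne hlt.le))
  have hint : Integrable (fun x => |p x - q x|) (μ + ν) :=
    (Measure.integrable_toReal_rnDeriv.sub Measure.integrable_toReal_rnDeriv).abs
  rw [← integral_add_compl hA hint, h_on, h_off]
  have h1 := two_mul_abs_measureReal_sub_le_tvDist μ ν hA
  have h2 := two_mul_abs_measureReal_sub_le_tvDist μ ν hA.compl
  linarith [le_abs_self (μ.real A - ν.real A), neg_abs_le (μ.real Aᶜ - ν.real Aᶜ)]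

lemma abs_integral_sub_le_mul_tvDist {f : Z → ℝ} (hf : Measurable f) {C : ℝ≥0}
    (hC : ∀ x, |f x| ≤ C) :
    |∫ x, f x ∂μ - ∫ x, f x ∂ν| ≤ C * tvDist μ ν := by
  have hμ : μ ≪ μ + ν := Measure.absolutelyContinuous_of_le (Measure.le_add_right le_rfl)
  have hν : ν ≪ μ + ν := Measure.absolutelyContinuous_of_le (Measure.le_add_left le_rfl)
  have hf_int (ρ : Measure Z) [IsFiniteMeasure ρ] : Integrable f ρ :=
    .of_bound hf.aestronglyMeasurable C (ae_of_all _ hC)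
  set p := fun x => (μ.rnDeriv (μ + ν) x).toReal
  set q := fun x => (ν.rnDeriv (μ + ν) x).toReal
  have hpq_int : Integrable (fun x => |p x - q x|) (μ + ν) :=
    (Measure.integrable_toReal_rnDeriv.sub Measure.integrable_toReal_rnDeriv).abs
  rw [← integral_toReal_rnDeriv_mul hμ, ← integral_toReal_rnDeriv_mul hν,
    ← integral_sub ((integrable_toReal_rnDeriv_mul_iff hμ).mpr (hf_int μ))
      ((integrable_toReal_rnDeriv_mul_iff hν).mpr (hf_int ν))]
  calc |∫ x, (p x * f x - q x * f x) ∂(μ + ν)|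
      ≤ ∫ x, C * |p x - q x| ∂(μ + ν) := by
        rw [← Real.norm_eq_abs]
        refine norm_integral_le_of_norm_le (hpq_int.const_mul C) (ae_of_all _ fun x => ?_)
        rw [← sub_mul, Real.norm_eq_abs, abs_mul, mul_comm]
        exact mul_le_mul_of_nonneg_right (hC x) (abs_nonneg _)
    _ = C * ∫ x, |p x - q x| ∂(μ + ν) := integral_const_mul _ _
    _ ≤ C * tvDist μ ν :=
        mul_le_mul_of_nonneg_left (integral_abs_toReal_rnDeriv_sub_le_tvDist μ ν) C.2

end TotalVariation

lemma tendsto_of_forall_approx {ι α : Type*} [PseudoMetricSpace α] {l : Filter ι} {a : ι → α}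
    {a₀ : α} (h : ∀ ε > 0, ∃ (b : ι → α) (b₀ : α), Tendsto b l (𝓝 b₀) ∧
      (∀ i, dist (a i) (b i) ≤ ε) ∧ dist a₀ b₀ ≤ ε) :
    Tendsto a l (𝓝 a₀) := by
  refine Metric.tendsto_nhds.mpr fun ε hε => ?_
  obtain ⟨b, b₀, hb, hab, hab₀⟩ := h (ε / 3) (by positivity)
  filter_upwards [Metric.tendsto_nhds.mp hb (ε / 3) (by positivity)] with i hi
  calc dist (a i) a₀ ≤ dist (a i) (b i) + dist (b i) b₀ + dist b₀ a₀ := dist_triangle4 _ _ _ _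
    _ < ε := by linarith [hab i, dist_comm b₀ a₀]

lemma abs_integral_sub_le_of_eqOn {Z : Type*} [MeasurableSpace Z] {μ : Measure Z}
    [IsFiniteMeasure μ] {φ ψ : Z → ℝ}
    (hφ : Integrable φ μ) (hψ : Integrable ψ μ) {s : Set Z} (hs : MeasurableSet s)
    (h_eq : Set.EqOn φ ψ s) {C : ℝ} (hC : ∀ x, |φ x - ψ x| ≤ C) :
    |∫ x, φ x ∂μ - ∫ x, ψ x ∂μ| ≤ C * μ.real sᶜ := by
  have h_zero : ∫ x in s, (φ x - ψ x) ∂μ = 0 :=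
    setIntegral_eq_zero_of_forall_eq_zero fun x hx => sub_eq_zero.mpr (h_eq hx)
  have := norm_integral_sub_setIntegral_le (f := fun x => φ x - ψ x) (ae_of_all μ hC) hs (hφ.sub hψ)
  rwa [h_zero, sub_zero, integral_sub hφ hψ, mul_comm] at this

section Lusin

variable {Z Y : Type*} [TopologicalSpace Z] [TopologicalSpace Y]

lemma exists_norm_le_eqOn_comp_of_continuousOn [NormalSpace Z] {T : Z → Y} {s : Set Z}
    (hs : IsClosed s) (hT : ContinuousOn T s) (f : Y →ᵇ ℝ) :
    ∃ g : Z →ᵇ ℝ, ‖g‖ ≤ ‖f‖ ∧ Set.EqOn g (f ∘ T) s := by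
  obtain ⟨g, hg_norm, hg⟩ := exists_norm_eq_domRestrict_eq_of_closed
    (f.compContinuous ⟨s.domRestrict T, hT.domRestrict⟩) hs
  exact ⟨g, hg_norm ▸ f.norm_compContinuous_le _, fun x hx => DFunLike.congr_fun hg ⟨x, hx⟩⟩

variable [MeasurableSpace Z] [OpensMeasurableSpace Z] [NormalSpace Z]
  [MeasurableSpace Y] [OpensMeasurableSpace Y]

lemma tendsto_integral_comp_of_continuousOn_closed {ι : Type*} {l : Filter ι}
    {μ : ι → Measure Z} [∀ i, IsFiniteMeasure (μ i)] {μ₀ : Measure Z} [IsFiniteMeasure μ₀]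
    (hμ : ∀ g : Z →ᵇ ℝ, Tendsto (fun i => ∫ x, g x ∂μ i) l (𝓝 (∫ x, g x ∂μ₀)))
    {T : Z → Y} (hT : Measurable T)
    (hT_lusin : ∀ ε > 0, ∃ s, IsClosed s ∧ ContinuousOn T s ∧ μ₀.real sᶜ ≤ ε ∧
      ∀ i, (μ i).real sᶜ ≤ ε)
    (f : Y →ᵇ ℝ) :
    Tendsto (fun i => ∫ x, f (T x) ∂μ i) l (𝓝 (∫ x, f (T x) ∂μ₀)) := by
  refine tendsto_of_forall_approx fun ε hε => ?_
  obtain ⟨s, hs, hTs, hμ₀s, hμs⟩ := hT_lusin (ε / (2 * ‖f‖ + 1)) (by positivity)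
  obtain ⟨g, hg_norm, hg⟩ := exists_norm_le_eqOn_comp_of_continuousOn hs hTs f
  have hfT : Measurable (f ∘ T) := f.continuous.measurable.comp hT
  have h_approx (ρ : Measure Z) [IsFiniteMeasure ρ] (hρ : ρ.real sᶜ ≤ ε / (2 * ‖f‖ + 1)) :
      dist (∫ x, f (T x) ∂ρ) (∫ x, g x ∂ρ) ≤ ε := by
    have hC : ∀ x, |f (T x) - g x| ≤ 2 * ‖f‖ := fun x => by
      calc |f (T x) - g x| ≤ ‖f‖ + ‖g‖ := (abs_sub _ _).trans
            (add_le_add (f.norm_coe_le_norm _) (g.norm_coe_le_norm _))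
        _ ≤ 2 * ‖f‖ := by linarith
    calc dist (∫ x, f (T x) ∂ρ) (∫ x, g x ∂ρ) ≤ 2 * ‖f‖ * ρ.real sᶜ :=
          abs_integral_sub_le_of_eqOn (.of_bound hfT.aestronglyMeasurable ‖f‖
            (ae_of_all _ fun x => f.norm_coe_le_norm _)) (g.integrable ρ) hs.measurableSet
            (fun x hx => (hg hx).symm) hC
      _ ≤ 2 * ‖f‖ * (ε / (2 * ‖f‖ + 1)) := by gcongr
      _ ≤ ε := by
          rw [mul_div_assoc']
          exact div_le_of_le_mul₀ (by positivity) hε.le (by nlinarith [norm_nonneg f])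
  exact ⟨fun i => ∫ x, g x ∂μ i, ∫ x, g x ∂μ₀, hμ g, fun i => h_approx (μ i) (hμs i),
    h_approx μ₀ hμ₀s⟩

end Lusin

theorem weak_limit_invariant_lusin
    -- Z a Polish space with its Borel σ-algebra
    (Z : Type*) [TopologicalSpace Z] [PolishSpace Z] [MeasurableSpace Z] [BorelSpace Z]
    -- T a Borel map
    (T : Z → Z) (hT : Measurable T)
    (ζseq : ℕ → Measure Z) (hζseq : ∀ n, IsProbabilityMeasure (ζseq n))
    (ζ : Measure Z) (hζ : IsProbabilityMeasure ζ)
    -- ζ_n → ζ weakly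
    (hweak : ∀ f : Z →ᵇ ℝ,
      Tendsto (fun n => ∫ z, f z ∂(ζseq n)) atTop (𝓝 (∫ z, f z ∂ζ)))
    -- ‖T_*ζ_n − ζ_n‖ → 0 in total variation
    (htv : Tendsto (fun n => tvDist (Measure.map T (ζseq n)) (ζseq n)) atTop (𝓝 0))
    -- a Lusin-type hypothesis: T is continuous on closed sets of uniformly large measure
    (hlusin : ∀ ε : ℝ, 0 < ε → ∃ Z₀ : Set Z, IsClosed Z₀ ∧ ContinuousOn T Z₀ ∧
      (ζ Z₀ᶜ).toReal ≤ ε ∧ ∀ n, (ζseq n Z₀ᶜ).toReal ≤ ε) :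
    Measure.map T ζ = ζ := by
  have h_comp (f : Z →ᵇ ℝ) :
      Tendsto (fun n => ∫ z, f (T z) ∂ζseq n) atTop (𝓝 (∫ z, f (T z) ∂ζ)) :=
    tendsto_integral_comp_of_continuousOn_closed hweak hT hlusin f
  have h_tv (f : Z →ᵇ ℝ) :
      Tendsto (fun n => ∫ z, f (T z) ∂ζseq n - ∫ z, f z ∂ζseq n) atTop (𝓝 0) := by
    refine squeeze_zero_norm (fun n => ?_) (by simpa using htv.const_mul ‖f‖)
    rw [← integral_map hT.aemeasurable f.continuous.aestronglyMeasurable]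
    exact abs_integral_sub_le_mul_tvDist _ _ (C := ‖f‖₊) f.continuous.measurable
      f.norm_coe_le_norm
  refine ext_of_forall_integral_eq_of_IsFiniteMeasure fun f => ?_
  rw [integral_map hT.aemeasurable f.continuous.aestronglyMeasurable]
  exact sub_eq_zero.mp (tendsto_nhds_unique ((h_comp f).sub (hweak f)) (h_tv f))
end

section
/- Let G be a second-countable topological group equipped with its Borel σ-algebra, m a Borel measure on G, and Λ ≤ G a countable subgroup that is discrete, i.e. there exists an open neighborhood U₀ of the identity with U₀ ∩ Λ = {1}. Let X ⊆ G be a Borel set with 0 < m(X) < ∞, and let (x_n) be a sequence in G converging to the identity such that m( {g ∈ X : g⁻¹ x_n g ∉ Λ} ) → 0 as n → ∞. Then x_n = 1 for all sufficiently large n. -/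
open MeasureTheory Filter Topology
open scoped ENNReal

/-!
For every `g` the conjugates `g⁻¹ xₙ g` tend to `1`, so by dominated convergence the set of
`g ∈ X` with `g⁻¹ xₙ g ∉ U₀` has measure tending to `0`. For large `n` this set and the one with
`g⁻¹ xₙ g ∉ Λ` together have measure `< m X`, so some `g ∈ X` has
`g⁻¹ xₙ g ∈ U₀ ∩ Λ = {1}`, i.e. `xₙ = 1`.
-/

theorem MeasureTheory.Measure.exists_mem_and_of_measure_add_lt {α : Type*} [MeasurableSpace α]
    {μ : Measure α} {X : Set α} {p q : α → Prop}
    (h : μ {a ∈ X | ¬p a} + μ {a ∈ X | ¬q a} < μ X) : ∃ a ∈ X, p a ∧ q a := by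
  by_contra! hX
  have hcover : X ⊆ {a ∈ X | ¬p a} ∪ {a ∈ X | ¬q a} := fun a ha => by
    by_cases hp : p a
    · exact Or.inr ⟨ha, hX a ha hp⟩
    · exact Or.inl ⟨ha, hp⟩
  exact (measure_mono hcover |>.trans (measure_union_le _ _)).not_gt h

theorem tendsto_measure_conj_notMem_nhds_one {G : Type*} [Group G] [TopologicalSpace G]
    [IsTopologicalGroup G] [MeasurableSpace G] [OpensMeasurableSpace G] (m : Measure G)
    {X U : Set G} (hX : m X ≠ ∞) (hU : IsOpen U) (hU1 : (1 : G) ∈ U)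
    {ι : Type*} {l : Filter ι} [l.IsCountablyGenerated] {x : ι → G} (hx : Tendsto x l (𝓝 1)) :
    Tendsto (fun i => m {g ∈ X | g⁻¹ * x i * g ∉ U}) l (𝓝 0) := by
  -- Dominated convergence needs a measurable set: work on the measurable hull of `X`.
  set Y := toMeasurable m X
  have hconj_cont (g : G) : Continuous fun y : G => g⁻¹ * y * g := by fun_prop
  have hconj_cont_left (y : G) : Continuous fun g : G => g⁻¹ * y * g := by fun_prop
  have hY : Tendsto (fun i => m {g ∈ Y | g⁻¹ * x i * g ∉ U}) l (𝓝 (m ∅)) := by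
    refine tendsto_measure_of_ae_tendsto_indicator l MeasurableSet.empty (fun i => ?_)
      (measurableSet_toMeasurable m X) (by rwa [measure_toMeasurable])
      (Eventually.of_forall fun i => Set.sep_subset _ _) (ae_of_all _ fun g => ?_)
    · exact (measurableSet_toMeasurable m X).inter
        (hU.preimage (hconj_cont_left (x i))).measurableSet.compl
    · have hg : Tendsto (fun i => g⁻¹ * x i * g) l (𝓝 1) := by
        simpa [Function.comp_def] using ((hconj_cont g).tendsto 1).comp hx
      filter_upwards [hg (hU.mem_nhds hU1)] with i (hi : g⁻¹ * x i * g ∈ U)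
      simp [hi]
  rw [measure_empty] at hY
  exact tendsto_of_tendsto_of_tendsto_of_le_of_le tendsto_const_nhds hY (fun _ => zero_le)
    fun i => measure_mono fun g hg => ⟨subset_toMeasurable m X hg.1, hg.2⟩

theorem eventually_trivial_of_conjugates_in_lattice_general
    -- G a second-countable topological group with its Borel σ-algebra
    (G : Type*) [Group G] [TopologicalSpace G] [IsTopologicalGroup G]
    [MeasurableSpace G] [BorelSpace G]
    -- m a Borel measure on G
    (m : Measure G)
    -- Λ a countable subgroup which is discrete
    (Λ : Subgroup G)
    (U₀ : Set G) (hU₀open : IsOpen U₀) (hU₀1 : (1 : G) ∈ U₀)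
    (hU₀Λ : U₀ ∩ (Λ : Set G) = {1})
    -- X a Borel set with 0 < m(X) < ∞
    (X : Set G) (hXpos : 0 < m X) (hXfin : m X < ∞)
    -- a sequence converging to the identity whose conjugates land in Λ asymptotically a.e. on X
    (x : ℕ → G) (hx : Tendsto x atTop (𝓝 (1 : G)))
    (hconj : Tendsto (fun n => m {g ∈ X | g⁻¹ * x n * g ∉ (Λ : Set G)}) atTop (𝓝 (0 : ℝ≥0∞))) :
    ∀ᶠ n in atTop, x n = 1 := by
  have hexcept := hconj.add <| tendsto_measure_conj_notMem_nhds_one m hXfin.ne hU₀open hU₀1 hx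
  rw [add_zero] at hexcept
  filter_upwards [hexcept.eventually_lt_const hXpos] with n hn
  obtain ⟨g, -, hgΛ, hgU⟩ := Measure.exists_mem_and_of_measure_add_lt hn
  have hconj_one : g⁻¹ * x n * g ∈ U₀ ∩ Λ := ⟨hgU, hgΛ⟩
  rw [hU₀Λ, Set.mem_singleton_iff] at hconj_one
  rwa [mul_assoc, inv_mul_eq_one, right_eq_mul] at hconj_one

theorem eventually_trivial_of_conjugates_in_lattice
    -- G a second-countable topological group with its Borel σ-algebra
    (G : Type*) [Group G] [TopologicalSpace G] [IsTopologicalGroup G]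
    [SecondCountableTopology G] [MeasurableSpace G] [BorelSpace G]
    -- m a Borel measure on G
    (m : Measure G)
    -- Λ a countable subgroup which is discrete
    (Λ : Subgroup G) (hΛcount : Countable Λ)
    (U₀ : Set G) (hU₀open : IsOpen U₀) (hU₀1 : (1 : G) ∈ U₀)
    (hU₀Λ : U₀ ∩ (Λ : Set G) = {1})
    -- X a Borel set with 0 < m(X) < ∞
    (X : Set G) (hX : MeasurableSet X) (hXpos : 0 < m X) (hXfin : m X < ∞)
    -- a sequence converging to the identity whose conjugates land in Λ asymptotically a.e. on X
    (x : ℕ → G) (hx : Tendsto x atTop (𝓝 (1 : G)))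
    (hconj : Tendsto (fun n => m {g ∈ X | g⁻¹ * x n * g ∉ (Λ : Set G)}) atTop (𝓝 (0 : ℝ≥0∞))) :
    ∀ᶠ n in atTop, x n = 1 :=
  eventually_trivial_of_conjugates_in_lattice_general G m Λ U₀ hU₀open hU₀1 hU₀Λ X hXpos hXfin x hx
    hconj
end

section
/- Let G be an infinite compact second-countable topological group, m its Haar Borel probability measure (invariant under left and right translations), and d a metric on G inducing its topology which is bi-invariant: d(g x h, g y h) = d(x,y) for all g, h, x, y ∈ G. For n ≥ 1 let A_n = {(x,y) ∈ G × G : d(x,y) < 1/n}; then (m×m)(A_n) > 0, and define ν_n = (m×m)(A_n)⁻¹ · (m×m)|_{A_n}. Then: (i) both marginals of ν_n equal m; (ii) ν_n is invariant under the diagonal G×G-action (g₁,g₂)·(h,k) = (g₁ h g₂⁻¹, g₁ k g₂⁻¹), i.e. the pushforward of ν_n under each such map equals ν_n; (iii) for every bounded continuous f : G × G → ℝ, ∫ f dν_n → ∫ f(x,x) dm(x); and (iv) ν_n(Δ) = 0 for every n, where Δ = {(x,x) : x ∈ G}. -/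
open MeasureTheory Filter Topology
open scoped ENNReal

/-
Make `d` a metric on `G`. The sections of `A_r = {(x, y) | d x y < r}` are the balls of radius `r`,
which all have the measure `m (ball 1 r) > 0` by left invariance; so `(m × m) A_r = m (ball 1 r)`
and the first marginal of the normalised restriction is `m`, the second one by symmetry of `A_r`.
Bi-invariance of `d` makes `A_r` invariant under `(h, k) ↦ (g₁ h g₂⁻¹, g₁ k g₂⁻¹)`, which preserves
`m × m`. Since `ν_n` lives within distance `1 / n` of the diagonal, uniform continuity of `f` on the
compact space `G × G` gives the weak convergence. Finally an infinite compact group has no isolated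
points, so Haar measure has no atoms and the diagonal is `m × m`-null.
-/

open Metric ProbabilityTheory Set

namespace MeasureTheory

variable {α β : Type*} [MeasurableSpace α] [MeasurableSpace β]

theorem Measure.map_fst_restrict_prod_eq_smul (μ : Measure α) (ν : Measure β) [SFinite μ]
    [SFinite ν] {s : Set (α × β)} (hs : MeasurableSet s) {c : ℝ≥0∞}
    (hc : ∀ x, ν (Prod.mk x ⁻¹' s) = c) :
    ((μ.prod ν).restrict s).map Prod.fst = c • μ := by
  ext t ht
  rw [map_apply measurable_fst ht, restrict_apply (measurable_fst ht), inter_comm, ← prod_univ,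
    ← restrict_apply hs, ← Measure.restrict_prod_eq_prod_univ, Measure.prod_apply hs]
  simp [hc]

theorem Measure.prod_diagonal_eq_zero [MeasurableEq α] (μ ν : Measure α) [SFinite ν]
    [NullSingletonClass ν] : μ.prod ν (diagonal α) = 0 := by
  have hsection (x : α) : Prod.mk x ⁻¹' diagonal α = {x} := by
    ext
    simp [eq_comm]
  simp [Measure.prod_apply measurableSet_diagonal, hsection]

theorem MeasurePreserving.map_cond {f : α → α} {μ : Measure α} (hf : MeasurePreserving f μ μ)
    {s : Set α} (hs : MeasurableSet s) (hfs : f ⁻¹' s = s) : μ[|s].map f = μ[|s] := by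
  have := (hf.restrict_preimage hs).map_eq
  rw [hfs] at this
  rw [ProbabilityTheory.cond, Measure.map_smul, this]

end MeasureTheory

theorem nhdsNE_one_neBot_of_infinite {G : Type*} [Group G] [TopologicalSpace G]
    [IsTopologicalGroup G] [CompactSpace G] [Infinite G] : (𝓝[≠] (1 : G)).NeBot := by
  refine ⟨fun h => ?_⟩
  have := discreteTopology_of_isOpen_singleton_one ((isOpen_singleton_iff_punctured_nhds 1).2 h)
  exact (finite_of_compact_of_discrete : Finite G).false

section NearDiagonal

variable (X : Type*) [PseudoMetricSpace X]

def nearDiagonal (r : ℝ) : Set (X × X) := {p | dist p.1 p.2 < r}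

variable {X} {r : ℝ}

theorem isOpen_nearDiagonal : IsOpen (nearDiagonal X r) :=
  isOpen_lt continuous_dist continuous_const

theorem preimage_mk_nearDiagonal (x : X) : Prod.mk x ⁻¹' nearDiagonal X r = ball x r := by
  ext y
  simp [nearDiagonal, dist_comm]

theorem preimage_swap_nearDiagonal : Prod.swap ⁻¹' nearDiagonal X r = nearDiagonal X r := by
  ext p
  simp [nearDiagonal, dist_comm]

theorem Isometry.preimage_prodMap_nearDiagonal {f : X → X} (hf : Isometry f) :
    Prod.map f f ⁻¹' nearDiagonal X r = nearDiagonal X r := by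
  ext p
  simp [nearDiagonal, hf.dist_eq]

variable [MeasurableSpace X] [BorelSpace X] [SecondCountableTopology X]

theorem measurableSet_nearDiagonal : MeasurableSet (nearDiagonal X r) :=
  isOpen_nearDiagonal.measurableSet

theorem tendsto_integral_of_map_fst_eq [CompactSpace X] {μ : Measure X} [IsFiniteMeasure μ]
    {ν : ℕ → Measure (X × X)} {r : ℕ → ℝ} (hr : Tendsto r atTop (𝓝 0))
    (hfst : ∀ n, (ν n).map Prod.fst = μ) (hnear : ∀ n, ∀ᵐ p ∂ν n, p ∈ nearDiagonal X (r n))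
    {f : X × X → ℝ} (hf : Continuous f) :
    Tendsto (fun n => ∫ p, f p ∂ν n) atTop (𝓝 (∫ x, f (x, x) ∂μ)) := by
  have hmass (n : ℕ) : ν n univ = μ univ := by
    rw [← hfst n, Measure.map_apply measurable_fst .univ, preimage_univ]
  have (n : ℕ) : IsFiniteMeasure (ν n) := ⟨hmass n ▸ measure_lt_top μ univ⟩
  set g : X × X → ℝ := fun p => f (p.1, p.1)
  have hg : Continuous g := hf.comp (continuous_fst.prodMk continuous_fst)
  have hdiag (n : ℕ) : ∫ x, f (x, x) ∂μ = ∫ p, g p ∂ν n := by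
    rw [← hfst n, integral_map measurable_fst.aemeasurable
      (by fun_prop : Continuous fun x : X => f (x, x)).aestronglyMeasurable]
  rw [Metric.tendsto_nhds]
  intro ε hε
  obtain ⟨η, hη, hηε⟩ := exists_pos_mul_lt hε (μ.real univ)
  obtain ⟨δ, hδ, hfδ⟩ :=
    Metric.uniformContinuous_iff.1 (CompactSpace.uniformContinuous_of_continuous hf) η hη
  filter_upwards [hr.eventually (gt_mem_nhds hδ)] with n hn
  have hclose : ∀ᵐ p ∂ν n, ‖f p - g p‖ ≤ η := by
    filter_upwards [hnear n] with p hp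
    have hpδ : dist p (p.1, p.1) < δ := by
      simpa [Prod.dist_eq, dist_comm] using (show dist p.1 p.2 < r n from hp).trans hn
    exact (hfδ hpδ).le
  calc dist (∫ p, f p ∂ν n) (∫ x, f (x, x) ∂μ) = ‖∫ p, f p - g p ∂ν n‖ := by
        rw [hdiag n, dist_eq_norm,
          integral_sub (hf.integrable_of_hasCompactSupport (.of_compactSpace f))
            (hg.integrable_of_hasCompactSupport (.of_compactSpace g))]
    _ ≤ η * (ν n).real univ := norm_integral_le_of_norm_le_const hclose
    _ < ε := by rwa [measureReal_def, hmass, ← measureReal_def, mul_comm]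

variable {μ ν : Measure X} {c : ℝ≥0∞}

theorem measure_nearDiagonal [SFinite ν] (hball : ∀ x, ν (ball x r) = c) :
    μ.prod ν (nearDiagonal X r) = c * μ univ := by
  simp [Measure.prod_apply measurableSet_nearDiagonal, preimage_mk_nearDiagonal, hball]

theorem map_fst_cond_nearDiagonal [IsProbabilityMeasure μ] [IsFiniteMeasure ν]
    (hball : ∀ x, ν (ball x r) = c) (hc : c ≠ 0) :
    (μ.prod ν)[|nearDiagonal X r].map Prod.fst = μ := by
  have hmass := measure_nearDiagonal (μ := μ) hball
  rw [measure_univ, mul_one] at hmass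
  have hc_top : c ≠ ∞ := hmass ▸ measure_ne_top _ _
  rw [ProbabilityTheory.cond, Measure.map_smul,
    Measure.map_fst_restrict_prod_eq_smul μ ν measurableSet_nearDiagonal
      (by simpa [preimage_mk_nearDiagonal] using hball),
    hmass, smul_smul, ENNReal.inv_mul_cancel hc hc_top, one_smul]

theorem map_snd_cond_nearDiagonal [IsProbabilityMeasure μ]
    (hball : ∀ x, μ (ball x r) = c) (hc : c ≠ 0) :
    (μ.prod μ)[|nearDiagonal X r].map Prod.snd = μ := by
  rw [show (Prod.snd : X × X → X) = Prod.fst ∘ Prod.swap from rfl,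
    ← Measure.map_map measurable_fst measurable_swap,
    Measure.measurePreserving_swap.map_cond measurableSet_nearDiagonal preimage_swap_nearDiagonal,
    map_fst_cond_nearDiagonal hball hc]

theorem Isometry.map_prodMap_cond_nearDiagonal {f : X → X} (hf : Isometry f)
    (hμ : MeasurePreserving f μ μ) [SFinite μ] :
    (μ.prod μ)[|nearDiagonal X r].map (Prod.map f f) = (μ.prod μ)[|nearDiagonal X r] :=
  (hμ.prod hμ).map_cond measurableSet_nearDiagonal hf.preimage_prodMap_nearDiagonal

end NearDiagonal

theorem measure_ball_eq_measure_ball_one {G : Type*} [Group G] [PseudoMetricSpace G]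
    [IsIsometricSMul G G] [MeasurableSpace G] [MeasurableMul G] (μ : Measure G)
    [μ.IsMulLeftInvariant] (x : G) (r : ℝ) : μ (ball x r) = μ (ball 1 r) := by
  rw [← measure_preimage_mul μ x⁻¹ (ball 1 r), preimage_mul_left_ball, inv_inv, mul_one]

theorem compact_group_nonrigidity_general
    -- G an infinite compact second-countable topological group with its Borel σ-algebra
    (G : Type*) [Group G] [TopologicalSpace G] [IsTopologicalGroup G] [CompactSpace G]
    [MeasurableSpace G] [BorelSpace G] [Infinite G]
    -- m the Haar Borel probability measure, invariant under left and right translations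
    (m : Measure G) [m.IsHaarMeasure] [IsProbabilityMeasure m]
    (hright : ∀ g : G, Measure.map (fun z => z * g) m = m)
    -- d a bi-invariant metric on G inducing its topology
    (d : G → G → ℝ)
    (hd_eq : ∀ x y : G, d x y = 0 ↔ x = y)
    (hd_symm : ∀ x y : G, d x y = d y x)
    (hd_tri : ∀ x y z : G, d x z ≤ d x y + d y z)
    (hd_topo : ∀ s : Set G, IsOpen s ↔ ∀ x ∈ s, ∃ ε > 0, ∀ y, d x y < ε → y ∈ s)
    (hd_biinv : ∀ g h x y : G, d (g * x * h) (g * y * h) = d x y)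
    -- A_n = {(x,y) : d(x,y) < 1/n} and ν_n the normalized restriction of m × m to A_n
    (A : ℕ → Set (G × G)) (hAdef : ∀ n, A n = {p : G × G | d p.1 p.2 < 1 / (n : ℝ)})
    (ν : ℕ → Measure (G × G))
    (hνdef : ∀ n, ν n = ((m.prod m) (A n))⁻¹ • ((m.prod m).restrict (A n))) :
    -- (m × m)(A_n) > 0 for n ≥ 1
    (∀ n : ℕ, 1 ≤ n → 0 < (m.prod m) (A n)) ∧
    -- (i) both marginals of ν_n equal m
    (∀ n : ℕ, 1 ≤ n → (ν n).map Prod.fst = m ∧ (ν n).map Prod.snd = m) ∧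
    -- (ii) ν_n is invariant under the diagonal left-right action of G × G
    (∀ n : ℕ, 1 ≤ n → ∀ g₁ g₂ : G,
      (ν n).map (fun p : G × G => (g₁ * p.1 * g₂⁻¹, g₁ * p.2 * g₂⁻¹)) = ν n) ∧
    -- (iii) ν_n converges weakly to the diagonal pushforward of m
    (∀ f : G × G → ℝ, Continuous f → (∃ C, ∀ p, |f p| ≤ C) →
      Tendsto (fun n => ∫ p, f p ∂(ν n)) atTop (𝓝 (∫ x, f (x, x) ∂m))) ∧
    -- (iv) ν_n gives no mass to the diagonal
    (∀ n : ℕ, 1 ≤ n → ν n (Set.diagonal G) = 0) := by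
  -- the topology of this metric space is definitionally the given one
  let : MetricSpace G := .ofDistTopology d (fun x => (hd_eq x x).2 rfl) hd_symm hd_tri hd_topo
    fun x y => (hd_eq x y).1
  have : IsIsometricSMul G G := ⟨fun g => .of_dist_eq fun x y =>
    (by simpa using hd_biinv g 1 x y : d (g * x) (g * y) = d x y)⟩
  have : m.IsMulRightInvariant := ⟨hright⟩
  have : (𝓝[≠] (1 : G)).NeBot := nhdsNE_one_neBot_of_infinite
  have hA (n : ℕ) : A n = nearDiagonal G (1 / n) := hAdef n
  have hν (n : ℕ) : ν n = (m.prod m)[|nearDiagonal G (1 / n)] := by rw [hνdef, hA]; rfl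
  have hball (n : ℕ) (x : G) : m (ball x (1 / n)) = m (ball 1 (1 / n)) :=
    measure_ball_eq_measure_ball_one m x _
  have hpos (n : ℕ) (hn : 1 ≤ n) : 0 < m (ball (1 : G) (1 / n)) :=
    measure_ball_pos m 1 (by positivity)
  refine ⟨fun n hn => ?_, fun n hn => ?_, fun n _ g₁ g₂ => ?_, fun f hf _ => ?_, fun n _ => ?_⟩
  · rw [hA, measure_nearDiagonal (hball n), measure_univ, mul_one]
    exact hpos n hn
  · rw [hν]
    exact ⟨map_fst_cond_nearDiagonal (hball n) (hpos n hn).ne',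
      map_snd_cond_nearDiagonal (hball n) (hpos n hn).ne'⟩
  · rw [hν]
    exact (Isometry.of_dist_eq fun x y => hd_biinv g₁ g₂⁻¹ x y).map_prodMap_cond_nearDiagonal
      ((measurePreserving_mul_right m g₂⁻¹).comp (measurePreserving_mul_left m g₁))
  · -- shift by one: `A 0` is empty since `1 / 0 = 0`
    refine (tendsto_add_atTop_iff_nat 1).1 (tendsto_integral_of_map_fst_eq
      tendsto_one_div_add_atTop_nhds_zero_nat (fun n => ?_) (fun n => ?_) hf)
    · rw [hν]
      exact map_fst_cond_nearDiagonal (hball _) (hpos _ (Nat.le_add_left 1 n)).ne'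
    · rw [hν]
      simpa using ae_cond_mem measurableSet_nearDiagonal
  · rw [hν]
    exact cond_absolutelyContinuous (Measure.prod_diagonal_eq_zero m m)

theorem compact_group_nonrigidity
    -- G an infinite compact second-countable topological group with its Borel σ-algebra
    (G : Type*) [Group G] [TopologicalSpace G] [IsTopologicalGroup G] [CompactSpace G]
    [SecondCountableTopology G] [MeasurableSpace G] [BorelSpace G] [Infinite G]
    -- m the Haar Borel probability measure, invariant under left and right translations
    (m : Measure G) [m.IsHaarMeasure] [IsProbabilityMeasure m]
    (hleft : ∀ g : G, Measure.map (fun z => g * z) m = m)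
    (hright : ∀ g : G, Measure.map (fun z => z * g) m = m)
    -- d a bi-invariant metric on G inducing its topology
    (d : G → G → ℝ)
    (hd_eq : ∀ x y : G, d x y = 0 ↔ x = y)
    (hd_symm : ∀ x y : G, d x y = d y x)
    (hd_tri : ∀ x y z : G, d x z ≤ d x y + d y z)
    (hd_topo : ∀ s : Set G, IsOpen s ↔ ∀ x ∈ s, ∃ ε > 0, ∀ y, d x y < ε → y ∈ s)
    (hd_biinv : ∀ g h x y : G, d (g * x * h) (g * y * h) = d x y)
    -- A_n = {(x,y) : d(x,y) < 1/n} and ν_n the normalized restriction of m × m to A_n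
    (A : ℕ → Set (G × G)) (hAdef : ∀ n, A n = {p : G × G | d p.1 p.2 < 1 / (n : ℝ)})
    (ν : ℕ → Measure (G × G))
    (hνdef : ∀ n, ν n = ((m.prod m) (A n))⁻¹ • ((m.prod m).restrict (A n))) :
    -- (m × m)(A_n) > 0 for n ≥ 1
    (∀ n : ℕ, 1 ≤ n → 0 < (m.prod m) (A n)) ∧
    -- (i) both marginals of ν_n equal m
    (∀ n : ℕ, 1 ≤ n → (ν n).map Prod.fst = m ∧ (ν n).map Prod.snd = m) ∧
    -- (ii) ν_n is invariant under the diagonal left-right action of G × G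
    (∀ n : ℕ, 1 ≤ n → ∀ g₁ g₂ : G,
      (ν n).map (fun p : G × G => (g₁ * p.1 * g₂⁻¹, g₁ * p.2 * g₂⁻¹)) = ν n) ∧
    -- (iii) ν_n converges weakly to the diagonal pushforward of m
    (∀ f : G × G → ℝ, Continuous f → (∃ C, ∀ p, |f p| ≤ C) →
      Tendsto (fun n => ∫ p, f p ∂(ν n)) atTop (𝓝 (∫ x, f (x, x) ∂m))) ∧
    -- (iv) ν_n gives no mass to the diagonal
    (∀ n : ℕ, 1 ≤ n → ν n (Set.diagonal G) = 0) :=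
  compact_group_nonrigidity_general G m hright d hd_eq hd_symm hd_tri hd_topo hd_biinv A hAdef ν
    hνdef
end
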